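/- arXiv:1808.03905 — 2 statements merged into one kernel-verified Lean document; each statement's English description precedes it below -/
import Mathlib

section
/- Let R be a Γ-graded von Neumann regular graded right self-injective ring and e a homogeneous idempotent of R. The following are equivalent: (a) e is graded faithful; (b) the two-sided ideal ReR is graded essential as a right ideal of R; (c) for every nonzero homogeneous x ∈ R one has xRe ≠ 0 (Re is a graded faithful left ideal); (d) for every nonzero homogeneous x ∈ R one has eRx ≠ 0 (eR is a graded faithful right ideal); (e) for every nonzero graded right ideal J of R there exist γ ∈ Γ and a nonzero right R-module homomorphism f : eR → J with f(eR ∩ R_δ) ⊆ J ∩ R_{δ+γ} for all δ ∈ Γ. -/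
/- Setting: `Γ = ι` an additive abelian group, `R` a `ι`-graded ring with identity,
with homogeneous components the additive subgroups `𝒜 γ`. -/

variable {ι R : Type*}

section Defs
variable [DecidableEq ι] [AddCommGroup ι] [Ring R] (𝒜 : ι → AddSubgroup R) [GradedRing 𝒜]

/-- An element of `R` is homogeneous if it lies in some component `𝒜 γ`. -/
def IsHomog (a : R) : Prop := ∃ γ : ι, a ∈ 𝒜 γ

/-- `R` is graded von Neumann regular: every homogeneous element has an inner inverse. -/
def GradedVNRegular : Prop := ∀ a : R, IsHomog 𝒜 a → ∃ b : R, a * b * a = a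

/-- A subset of `R` is a right ideal. -/
def IsRightIdealSet (I : Set R) : Prop :=
  (0 : R) ∈ I ∧ (∀ x ∈ I, ∀ y ∈ I, x + y ∈ I) ∧ ∀ x ∈ I, ∀ r : R, x * r ∈ I

/-- A graded right ideal: a right ideal containing all homogeneous components of
its elements. -/
def IsGradedRightIdeal (I : Set R) : Prop :=
  IsRightIdealSet I ∧ ∀ x ∈ I, ∀ γ : ι, ((DirectSum.decompose 𝒜 x γ : 𝒜 γ) : R) ∈ I

/-- `A` is graded essential in `B` (as graded right ideals): `A ⊆ B` and every nonzero
graded right ideal contained in `B` meets `A` nontrivially. -/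
def GradedEssentialIn (A B : Set R) : Prop :=
  A ⊆ B ∧ ∀ J : Set R, IsGradedRightIdeal 𝒜 J → J ⊆ B → (∃ x ∈ J, x ≠ 0) →
    ∃ x, x ∈ A ∩ J ∧ x ≠ 0

/-- Graded Baer criterion: `R` is graded right self-injective. A homomorphism from a
graded right ideal `I` to `R` is encoded as a function `f : R → R` which is additive on
`I`, right `R`-linear on `I`, and of degree `γ` on `I`. -/
def GradedSelfInjective : Prop :=
  ∀ I : Set R, IsGradedRightIdeal 𝒜 I → ∀ γ : ι, ∀ f : R → R,
    (∀ x ∈ I, ∀ y ∈ I, f (x + y) = f x + f y) →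
    (∀ x ∈ I, ∀ r : R, f (x * r) = f x * r) →
    (∀ δ : ι, ∀ x ∈ I, x ∈ 𝒜 δ → f x ∈ 𝒜 (γ + δ)) →
    ∃ c ∈ 𝒜 γ, ∀ x ∈ I, f x = c * x

/-- A homogeneous idempotent of `R`. -/
def IsHomogIdem (e : R) : Prop := IsHomog 𝒜 e ∧ e * e = e

/-- A graded abelian idempotent: every homogeneous idempotent of the corner ring `eRe`
is central in `eRe` (membership `f ∈ eRe` is expressed as `e * f * e = f`). -/
def GrAbelianIdem (e : R) : Prop :=
  IsHomogIdem 𝒜 e ∧ ∀ f : R, IsHomog 𝒜 f → e * f * e = f → f * f = f →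
    ∀ x : R, e * x * e = x → f * x = x * f

/-- A graded directly finite idempotent: for homogeneous `x, y ∈ eRe`,
`x * y = e` implies `y * x = e`. -/
def GrDirFinIdem (e : R) : Prop :=
  IsHomogIdem 𝒜 e ∧ ∀ x y : R, IsHomog 𝒜 x → IsHomog 𝒜 y →
    e * x * e = x → e * y * e = y → x * y = e → y * x = e

/-- A graded faithful idempotent: the only central homogeneous idempotent `y`
with `e * y = 0` is `y = 0`. -/
def GrFaithfulIdem (e : R) : Prop :=
  IsHomogIdem 𝒜 e ∧ ∀ y : R, IsHomog 𝒜 y → y * y = y → (∀ r : R, y * r = r * y) →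
    e * y = 0 → y = 0

end Defs

/-!
Graded von Neumann regularity makes `R` graded semiprime: a homogeneous `a` with `aRa = 0` is zero.
Consequently `aRb = 0 ↔ bRa = 0` for homogeneous `a`, `b`, which gives (d) ⇒ (c); the
implications (c) ⇒ (a), (b), (e), (b) ⇒ (a) and (e) ⇒ (c) are direct.

For (a) ⇒ (d) let `B = ReR` and let `A` be its right annihilator, so that `eRx = 0` means
`x ∈ A`. Semiprimeness gives `A ∩ B = 0`, and the projection `A ⊕ B → A` is a graded
homomorphism of degree `0`; by graded self-injectivity it is left multiplication by some
`c ∈ R_0`. No nonzero homogeneous element annihilates `A ⊕ B`, which forces `c` to be a central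
idempotent. As `e ∈ B`, `ec = ce = 0`, so faithfulness gives `c = 0` and hence `A = 0`.
-/

section Projection

variable {M S : Type*} [AddCommGroup M] [SetLike S M] [AddSubgroupClass S M]

open scoped Classical in
noncomputable def projAlong (A B : S) (u : M) : M :=
  if h : ∃ a ∈ A, ∃ b ∈ B, a + b = u then h.choose else 0

theorem projAlong_add {A B : S} (hAB : ∀ x ∈ A, x ∈ B → x = 0) {a b : M} (ha : a ∈ A)
    (hb : b ∈ B) : projAlong A B (a + b) = a := by
  have h : ∃ a' ∈ A, ∃ b' ∈ B, a' + b' = a + b := ⟨a, ha, b, hb, rfl⟩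
  obtain ⟨ha', b', hb', hab'⟩ := h.choose_spec
  rw [projAlong, dif_pos h]
  have hdiff : h.choose - a = b - b' := by
    rw [sub_eq_sub_iff_add_eq_add, hab', add_comm]
  exact sub_eq_zero.mp (hAB _ (sub_mem ha' ha) (hdiff ▸ sub_mem hb hb'))

end Projection

namespace TwoSidedIdeal

variable [Ring R]

def rightAnnihilator (I : TwoSidedIdeal R) : TwoSidedIdeal R :=
  .mk' {a | ∀ b ∈ I, b * a = 0} (fun _ _ => mul_zero _)
    (fun hx hy b hb => by rw [mul_add, hx b hb, hy b hb, add_zero])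
    (fun hx b hb => by rw [mul_neg, hx b hb, neg_zero])
    (fun {x _} hy b hb => by rw [← mul_assoc, hy _ (I.mul_mem_right b x hb)])
    (fun hx b hb => by rw [← mul_assoc, hx b hb, zero_mul])

theorem mem_rightAnnihilator {I : TwoSidedIdeal R} {a : R} :
    a ∈ rightAnnihilator I ↔ ∀ b ∈ I, b * a = 0 := by
  simp [rightAnnihilator]

theorem mem_rightAnnihilator_span_singleton {e x : R} :
    x ∈ rightAnnihilator (span {e}) ↔ ∀ r, e * r * x = 0 := by
  refine ⟨fun hx r => mem_rightAnnihilator.1 hx _ (mul_mem_right _ _ _ (subset_span rfl)),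
    fun h => mem_rightAnnihilator.2 fun b hb => ?_⟩
  suffices ∀ r, b * r * x = 0 by simpa using this 1
  induction hb using span_induction with
  | mem b hb => rwa [Set.mem_singleton_iff.1 hb]
  | zero => simp
  | add b b' _ _ hb hb' => simp [add_mul, hb, hb']
  | neg b _ hb => simp [hb]
  | left_absorb a b _ hb => simp [mul_assoc, hb]
  | right_absorb s b _ hb => intro r; rw [mul_assoc b, hb]

theorem coe_span_singleton (e : R) :
    (span {e} : Set R) = AddSubgroup.closure {x : R | ∃ r s : R, x = r * e * s} := by
  ext z
  rw [SetLike.mem_coe, SetLike.mem_coe, mem_span_iff_mem_addSubgroup_closure]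
  congr!
  ext x
  simp [Set.mem_mul, eq_comm]

end TwoSidedIdeal

section

variable [Ring R] {𝒜 : ι → AddSubgroup R}

theorem GradedVNRegular.eq_zero_of_forall_mul_mul_eq_zero (hreg : GradedVNRegular 𝒜) {a : R}
    (ha : IsHomog 𝒜 a) (h : ∀ r, a * r * a = 0) : a = 0 := by
  obtain ⟨b, hb⟩ := hreg a ha
  rw [← hb, h]

theorem grFaithfulIdem_of_forall_mul_mul_ne_zero {e : R} (he : IsHomogIdem 𝒜 e)
    (h : ∀ x : R, IsHomog 𝒜 x → x ≠ 0 → ∃ r : R, x * r * e ≠ 0) :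
    GrFaithfulIdem 𝒜 e := by
  refine ⟨he, fun y hy _ hcentral hey => ?_⟩
  by_contra hy0
  obtain ⟨r, hr⟩ := h y hy hy0
  exact hr (by rw [hcentral r, mul_assoc, hcentral e, hey, mul_zero])

end

section Graded

open DirectSum TwoSidedIdeal

variable [DecidableEq ι] [AddCommGroup ι] [Ring R] {𝒜 : ι → AddSubgroup R} [GradedRing 𝒜]

theorem mul_mul_eq_zero_of_forall_mem (u v : R) (h : ∀ i, ∀ m ∈ 𝒜 i, u * m * v = 0)
    (r : R) : u * r * v = 0 := by
  induction r using DirectSum.Decomposition.inductionOn 𝒜 with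
  | zero => simp
  | homogeneous m => exact h _ m m.2
  | add m m' hm hm' => rw [mul_add, add_mul, hm, hm', add_zero]

theorem GradedVNRegular.mul_mul_eq_zero_comm (hreg : GradedVNRegular 𝒜) {a b : R}
    (ha : IsHomog 𝒜 a) (hb : IsHomog 𝒜 b) (h : ∀ r, a * r * b = 0) (r : R) :
    b * r * a = 0 := by
  obtain ⟨i, ha⟩ := ha
  obtain ⟨j, hb⟩ := hb
  refine mul_mul_eq_zero_of_forall_mem (𝒜 := 𝒜) b a (fun k m hm => ?_) r
  refine hreg.eq_zero_of_forall_mul_mul_eq_zero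
    ⟨_, SetLike.mul_mem_graded (SetLike.mul_mem_graded hb hm) ha⟩ fun s => ?_
  calc b * m * a * s * (b * m * a) = b * m * (a * s * b) * m * a := by noncomm_ring
    _ = 0 := by rw [h]; simp

theorem IsGradedRightIdeal.exists_isHomog_ne_zero {J : Set R} (hJ : IsGradedRightIdeal 𝒜 J)
    (h : ∃ x ∈ J, x ≠ 0) : ∃ x ∈ J, IsHomog 𝒜 x ∧ x ≠ 0 := by
  classical
  obtain ⟨x, hxJ, hx0⟩ := h
  by_contra! hJ0
  refine hx0 ?_
  rw [← sum_support_decompose 𝒜 x]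
  exact Finset.sum_eq_zero fun i _ => hJ0 _ (hJ.2 x hxJ i) ⟨i, SetLike.coe_mem _⟩

theorem isGradedRightIdeal_range_mul {x : R} (hx : IsHomog 𝒜 x) :
    IsGradedRightIdeal 𝒜 (Set.range (x * ·)) := by
  obtain ⟨d, hd⟩ := hx
  refine ⟨⟨⟨0, mul_zero x⟩, ?_, ?_⟩, ?_⟩
  · rintro _ ⟨s, rfl⟩ _ ⟨t, rfl⟩
    exact ⟨s + t, mul_add x s t⟩
  · rintro _ ⟨s, rfl⟩ r
    exact ⟨s * r, (mul_assoc x s r).symm⟩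
  · rintro _ ⟨s, rfl⟩ i
    refine ⟨decompose 𝒜 s (i - d), ?_⟩
    have h := coe_decompose_mul_add_of_left_mem 𝒜 hd (b := s) (j := i - d)
    rw [add_sub_cancel] at h
    exact h.symm

theorem mem_of_add_mem_of_isHomogeneous {S : Type*} [SetLike S R] [AddSubgroupClass S R]
    {A B : S} (hA : SetLike.IsHomogeneous 𝒜 A) (hB : SetLike.IsHomogeneous 𝒜 B)
    (hAB : ∀ x ∈ A, x ∈ B → x = 0) {a b : R} (ha : a ∈ A) (hb : b ∈ B) {δ : ι}
    (hab : a + b ∈ 𝒜 δ) : a ∈ 𝒜 δ := by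
  have hsplit : a + b = decompose 𝒜 a δ + decompose 𝒜 b δ := by
    rw [← AddMemClass.coe_add, ← DirectSum.add_apply, ← decompose_add,
      decompose_of_mem_same 𝒜 hab]
  rw [← projAlong_add hAB ha hb, hsplit, projAlong_add hAB (hA δ ha) (hB δ hb)]
  exact SetLike.coe_mem _

namespace TwoSidedIdeal

theorem isGradedRightIdeal_coe {I : TwoSidedIdeal R} (hI : SetLike.IsHomogeneous 𝒜 I) :
    IsGradedRightIdeal 𝒜 (I : Set R) :=
  ⟨⟨I.zero_mem, fun _ hx _ hy => I.add_mem hx hy, fun x hx r => I.mul_mem_right x r hx⟩,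
    fun _ hx i => hI i hx⟩

theorem isHomogeneous_inf {I J : TwoSidedIdeal R} (hI : SetLike.IsHomogeneous 𝒜 I)
    (hJ : SetLike.IsHomogeneous 𝒜 J) : SetLike.IsHomogeneous 𝒜 (I ⊓ J) :=
  fun i _ hx => (mem_inf R).2 ⟨hI i ((mem_inf R).1 hx).1, hJ i ((mem_inf R).1 hx).2⟩

theorem isHomogeneous_sup {I J : TwoSidedIdeal R} (hI : SetLike.IsHomogeneous 𝒜 I)
    (hJ : SetLike.IsHomogeneous 𝒜 J) : SetLike.IsHomogeneous 𝒜 (I ⊔ J) := by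
  intro i x hx
  obtain ⟨a, ha, b, hb, rfl⟩ := mem_sup.1 hx
  rw [decompose_add, DirectSum.add_apply, AddMemClass.coe_add]
  exact AddMemClass.add_mem (mem_sup_left (hI i ha)) (mem_sup_right (hJ i hb))

theorem induction_of_isHomogeneous {I : TwoSidedIdeal R} (hI : SetLike.IsHomogeneous 𝒜 I)
    {p : R → Prop} (zero : p 0) (add : ∀ x y, p x → p y → p (x + y))
    (homogeneous : ∀ i, ∀ x ∈ I, x ∈ 𝒜 i → p x) {x : R} (hx : x ∈ I) : p x := by
  classical
  rw [← sum_support_decompose 𝒜 x]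
  exact Finset.sum_induction _ p add zero fun i _ => homogeneous i _ (hI i hx) (SetLike.coe_mem _)

theorem coe_decompose_mul_mem_left (I : TwoSidedIdeal R) {z : R}
    (hz : ∀ j, (decompose 𝒜 z j : R) ∈ I) (a : R) (i : ι) :
    (decompose 𝒜 (a * z) i : R) ∈ I := by
  induction a using DirectSum.Decomposition.inductionOn 𝒜 with
  | zero => simp
  | @homogeneous j m =>
    have h := coe_decompose_mul_add_of_left_mem 𝒜 m.2 (b := z) (j := i - j)
    rw [add_sub_cancel] at h
    rw [h]
    exact I.mul_mem_left _ _ (hz _)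
  | add a a' ha ha' =>
    rw [add_mul, decompose_add, DirectSum.add_apply, AddMemClass.coe_add]
    exact I.add_mem ha ha'

theorem coe_decompose_mul_mem_right (I : TwoSidedIdeal R) {z : R}
    (hz : ∀ j, (decompose 𝒜 z j : R) ∈ I) (a : R) (i : ι) :
    (decompose 𝒜 (z * a) i : R) ∈ I := by
  induction a using DirectSum.Decomposition.inductionOn 𝒜 with
  | zero => simp
  | @homogeneous j m =>
    have h := coe_decompose_mul_add_of_right_mem 𝒜 m.2 (a := z) (i := i - j)
    rw [sub_add_cancel] at h
    rw [h]
    exact I.mul_mem_right _ _ (hz _)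
  | add a a' ha ha' =>
    rw [mul_add, decompose_add, DirectSum.add_apply, AddMemClass.coe_add]
    exact I.add_mem ha ha'

theorem isHomogeneous_span {s : Set R} (hs : ∀ x ∈ s, IsHomog 𝒜 x) :
    SetLike.IsHomogeneous 𝒜 (span s) := by
  intro i z hz
  induction hz using span_induction generalizing i with
  | mem x hx =>
    obtain ⟨j, hj⟩ := hs x hx
    by_cases hji : j = i
    · rw [← hji, decompose_of_mem_same 𝒜 hj]
      exact subset_span hx
    · rw [decompose_of_mem_ne 𝒜 hj hji]
      exact zero_mem _
  | zero => simp
  | add x y _ _ hx hy =>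
    rw [decompose_add, DirectSum.add_apply, AddMemClass.coe_add]
    exact AddMemClass.add_mem (hx i) (hy i)
  | neg x _ hx =>
    rw [decompose_neg, DFinsupp.neg_apply, NegMemClass.coe_neg]
    exact NegMemClass.neg_mem (hx i)
  | left_absorb a x _ hx => exact coe_decompose_mul_mem_left _ hx a i
  | right_absorb a x _ hx => exact coe_decompose_mul_mem_right _ hx a i

theorem isHomogeneous_rightAnnihilator {I : TwoSidedIdeal R} (hI : SetLike.IsHomogeneous 𝒜 I) :
    SetLike.IsHomogeneous 𝒜 (rightAnnihilator I) := by
  intro i a ha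
  refine mem_rightAnnihilator.2 fun b hb =>
    induction_of_isHomogeneous hI (p := (· * decompose 𝒜 a i = 0)) (zero_mul _)
      (fun x y hx hy => by rw [add_mul, hx, hy, add_zero]) (fun j b hb hbj => ?_) hb
  rw [← coe_decompose_mul_add_of_left_mem 𝒜 hbj, mem_rightAnnihilator.1 ha b hb]
  simp

theorem eq_zero_of_mem_rightAnnihilator (hreg : GradedVNRegular 𝒜) {I : TwoSidedIdeal R}
    (hI : SetLike.IsHomogeneous 𝒜 I) {x : R} (hxI : x ∈ I) (hxA : x ∈ rightAnnihilator I) :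
    x = 0 :=
  induction_of_isHomogeneous (isHomogeneous_inf hI (isHomogeneous_rightAnnihilator hI))
    (p := (· = 0)) rfl (fun _ _ hx hy => by rw [hx, hy, add_zero])
    (fun i z hz hzi => hreg.eq_zero_of_forall_mul_mul_eq_zero ⟨i, hzi⟩ fun r =>
      mem_rightAnnihilator.1 ((mem_inf R).1 hz).2 _ (I.mul_mem_right _ r ((mem_inf R).1 hz).1))
    ((mem_inf R).2 ⟨hxI, hxA⟩)

theorem eq_zero_of_mul_eq_zero_of_mul_rightAnnihilator (hreg : GradedVNRegular 𝒜)
    {I : TwoSidedIdeal R} (hI : SetLike.IsHomogeneous 𝒜 I) {z : R} (hz : IsHomog 𝒜 z)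
    (hzI : ∀ b ∈ I, z * b = 0) (hzA : ∀ a ∈ rightAnnihilator I, z * a = 0) : z = 0 := by
  have hzA' : z ∈ rightAnnihilator I := by
    refine mem_rightAnnihilator.2 fun b hb =>
      induction_of_isHomogeneous hI (p := (· * z = 0)) (zero_mul z)
        (fun _ _ hx hy => by rw [add_mul, hx, hy, add_zero]) (fun i b hb hbi => ?_) hb
    have hzRb : ∀ r, z * r * b = 0 := fun r => by rw [mul_assoc, hzI _ (I.mul_mem_left r b hb)]
    simpa using hreg.mul_mul_eq_zero_comm hz ⟨i, hbi⟩ hzRb 1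
  exact hreg.eq_zero_of_forall_mul_mul_eq_zero hz fun r => by
    rw [mul_assoc]
    exact hzA _ ((rightAnnihilator I).mul_mem_left r z hzA')

end TwoSidedIdeal

theorem GradedSelfInjective.exists_projection_onto_rightAnnihilator
    (hinj : GradedSelfInjective 𝒜) (hreg : GradedVNRegular 𝒜) {I : TwoSidedIdeal R}
    (hI : SetLike.IsHomogeneous 𝒜 I) :
    ∃ c ∈ 𝒜 0, (∀ b ∈ I, c * b = 0) ∧ ∀ a ∈ rightAnnihilator I, c * a = a := by
  set A := rightAnnihilator I
  have hA : SetLike.IsHomogeneous 𝒜 A := isHomogeneous_rightAnnihilator hI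
  have hAI : ∀ x ∈ A, x ∈ I → x = 0 := fun x hxA hxI =>
    eq_zero_of_mem_rightAnnihilator hreg hI hxI hxA
  have proj_add {a b} (ha : a ∈ A) (hb : b ∈ I) := projAlong_add hAI ha hb
  obtain ⟨c, hc0, hc⟩ := hinj _ (isGradedRightIdeal_coe (isHomogeneous_sup hA hI)) 0
    (projAlong A I)
    (fun x hx y hy => by
      obtain ⟨a, ha, b, hb, rfl⟩ := mem_sup.1 hx
      obtain ⟨a', ha', b', hb', rfl⟩ := mem_sup.1 hy
      rw [add_add_add_comm, proj_add (A.add_mem ha ha') (I.add_mem hb hb'), proj_add ha hb,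
        proj_add ha' hb'])
    (fun x hx r => by
      obtain ⟨a, ha, b, hb, rfl⟩ := mem_sup.1 hx
      rw [add_mul, proj_add (A.mul_mem_right a r ha) (I.mul_mem_right b r hb), proj_add ha hb])
    (fun δ x hx hxδ => by
      obtain ⟨a, ha, b, hb, rfl⟩ := mem_sup.1 hx
      rw [zero_add, proj_add ha hb]
      exact mem_of_add_mem_of_isHomogeneous hA hI hAI ha hb hxδ)
  refine ⟨c, hc0, fun b hb => ?_, fun a ha => ?_⟩
  · rw [← hc b (mem_sup_right hb)]
    simpa using proj_add A.zero_mem hb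
  · rw [← hc a (mem_sup_left ha)]
    simpa using proj_add ha I.zero_mem

theorem GradedSelfInjective.exists_central_idempotent (hinj : GradedSelfInjective 𝒜)
    (hreg : GradedVNRegular 𝒜) {I : TwoSidedIdeal R} (hI : SetLike.IsHomogeneous 𝒜 I) :
    ∃ c ∈ 𝒜 0, c * c = c ∧ (∀ r, c * r = r * c) ∧ (∀ b ∈ I, c * b = 0) ∧
      ∀ a ∈ rightAnnihilator I, c * a = a := by
  obtain ⟨c, hc0, hcI, hcA⟩ := hinj.exists_projection_onto_rightAnnihilator hreg hI
  have hkill {z : R} (hz : IsHomog 𝒜 z) (hzI : ∀ b ∈ I, z * b = 0)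
      (hzA : ∀ a ∈ rightAnnihilator I, z * a = 0) : z = 0 :=
    eq_zero_of_mul_eq_zero_of_mul_rightAnnihilator hreg hI hz hzI hzA
  refine ⟨c, hc0, ?_, fun r => ?_, hcI, hcA⟩
  · have hcc : c * c - c ∈ 𝒜 0 := sub_mem (by simpa using SetLike.mul_mem_graded hc0 hc0) hc0
    refine sub_eq_zero.1 (hkill ⟨0, hcc⟩ (fun b hb => ?_) (fun a ha => ?_))
    · rw [sub_mul, mul_assoc, hcI b hb, mul_zero, sub_zero]
    · rw [sub_mul, mul_assoc, hcA a ha, hcA a ha, sub_self]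
  induction r using DirectSum.Decomposition.inductionOn 𝒜 with
  | zero => simp
  | @homogeneous i m =>
    have hcm : c * m - m * c ∈ 𝒜 i := sub_mem (by simpa using SetLike.mul_mem_graded hc0 m.2)
      (by simpa using SetLike.mul_mem_graded m.2 hc0)
    refine sub_eq_zero.1 (hkill ⟨i, hcm⟩ (fun b hb => ?_) (fun a ha => ?_))
    · rw [sub_mul, mul_assoc, mul_assoc, hcI _ (I.mul_mem_left _ b hb), hcI b hb, mul_zero,
        sub_zero]
    · rw [sub_mul, mul_assoc, mul_assoc, hcA _ ((rightAnnihilator I).mul_mem_left _ a ha),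
        hcA a ha, sub_self]
  | add r r' hr hr' => rw [mul_add, add_mul, hr, hr']

theorem GrFaithfulIdem.exists_mul_mul_ne_zero (hreg : GradedVNRegular 𝒜)
    (hinj : GradedSelfInjective 𝒜) {e : R} (hf : GrFaithfulIdem 𝒜 e) {x : R}
    (hx0 : x ≠ 0) : ∃ r, e * r * x ≠ 0 := by
  obtain ⟨c, hc0, hcc, hcentral, hcI, hcA⟩ :=
    hinj.exists_central_idempotent hreg (isHomogeneous_span (s := {e}) (by simpa using hf.1.1))
  have hc : c = 0 := hf.2 c ⟨0, hc0⟩ hcc hcentral <| by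
    rw [← hcentral e]
    exact hcI e (subset_span rfl)
  by_contra! h
  exact hx0 (by rw [← hcA x (mem_rightAnnihilator_span_singleton.2 h), hc, zero_mul])

theorem gradedEssentialIn_span_of_forall_mul_mul_ne_zero {e : R}
    (h : ∀ x : R, IsHomog 𝒜 x → x ≠ 0 → ∃ r : R, x * r * e ≠ 0) :
    GradedEssentialIn 𝒜 (span {e} : Set R) Set.univ := by
  refine ⟨Set.subset_univ _, fun J hJ _ hJ0 => ?_⟩
  obtain ⟨x, hxJ, hx, hx0⟩ := hJ.exists_isHomog_ne_zero hJ0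
  obtain ⟨r, hr⟩ := h x hx hx0
  refine ⟨x * r * e, ⟨mul_mem_left _ _ _ (subset_span rfl), ?_⟩, hr⟩
  rw [mul_assoc]
  exact hJ.1.2.2 x hxJ _

theorem grFaithfulIdem_of_gradedEssentialIn_span {e : R} (he : IsHomogIdem 𝒜 e)
    (h : GradedEssentialIn 𝒜 (span {e} : Set R) Set.univ) : GrFaithfulIdem 𝒜 e := by
  refine ⟨he, fun y hy hyy hcentral hey => ?_⟩
  have hyA : y ∈ rightAnnihilator (span {e}) :=
    mem_rightAnnihilator_span_singleton.2 fun r => by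
      rw [mul_assoc, ← hcentral, ← mul_assoc, hey, zero_mul]
  by_contra hy0
  obtain ⟨_, ⟨hzI, s, rfl⟩, hz0⟩ :=
    h.2 _ (isGradedRightIdeal_range_mul hy) (Set.subset_univ _) ⟨y, ⟨1, mul_one y⟩, hy0⟩
  refine hz0 ?_
  calc y * s = y * (y * s) := by rw [← mul_assoc, hyy]
    _ = y * s * y := hcentral _
    _ = 0 := mem_rightAnnihilator.1 hyA _ hzI

theorem exists_gradedHom_ne_zero_of_forall_mul_mul_ne_zero {e : R} (hee : e * e = e)
    (h : ∀ x : R, IsHomog 𝒜 x → x ≠ 0 → ∃ r : R, x * r * e ≠ 0) {J : Set R}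
    (hJ : IsGradedRightIdeal 𝒜 J) (hJ0 : ∃ x ∈ J, x ≠ 0) :
    ∃ γ : ι, ∃ f : R → R,
      (∀ x : R, e * x = x → f x ∈ J) ∧
      (∀ x y : R, e * x = x → e * y = y → f (x + y) = f x + f y) ∧
      (∀ x : R, e * x = x → ∀ r : R, f (x * r) = f x * r) ∧
      (∀ δ : ι, ∀ x : R, e * x = x → x ∈ 𝒜 δ → f x ∈ 𝒜 (δ + γ)) ∧
      (∃ x : R, e * x = x ∧ f x ≠ 0) := by
  obtain ⟨x, hxJ, ⟨d, hxd⟩, hx0⟩ := hJ.exists_isHomog_ne_zero hJ0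
  obtain ⟨r, hr⟩ := h x ⟨d, hxd⟩ hx0
  obtain ⟨i, m, hm, hme⟩ : ∃ i, ∃ m ∈ 𝒜 i, x * m * e ≠ 0 := by
    by_contra! h
    exact hr (mul_mul_eq_zero_of_forall_mem x e h r)
  refine ⟨d + i, (x * m * ·), fun u _ => ?_, fun u v _ _ => mul_add _ u v,
    fun u _ r => (mul_assoc _ u r).symm, fun δ u _ hu => ?_, e, hee, hme⟩
  · show x * m * u ∈ J
    rw [mul_assoc]
    exact hJ.1.2.2 x hxJ _
  · rw [add_comm]
    exact SetLike.mul_mem_graded (SetLike.mul_mem_graded hxd hm) hu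

theorem exists_mul_mul_ne_zero_of_exists_gradedHom {e : R} (hee : e * e = e)
    (h : ∀ J : Set R, IsGradedRightIdeal 𝒜 J → (∃ x ∈ J, x ≠ 0) →
      ∃ γ : ι, ∃ f : R → R,
        (∀ x : R, e * x = x → f x ∈ J) ∧
        (∀ x y : R, e * x = x → e * y = y → f (x + y) = f x + f y) ∧
        (∀ x : R, e * x = x → ∀ r : R, f (x * r) = f x * r) ∧
        (∀ δ : ι, ∀ x : R, e * x = x → x ∈ 𝒜 δ → f x ∈ 𝒜 (δ + γ)) ∧
        (∃ x : R, e * x = x ∧ f x ≠ 0))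
    {x : R} (hx : IsHomog 𝒜 x) (hx0 : x ≠ 0) : ∃ r : R, x * r * e ≠ 0 := by
  obtain ⟨_, f, hfJ, -, hflin, -, u, hu, hfu⟩ :=
    h _ (isGradedRightIdeal_range_mul hx) ⟨x, ⟨1, mul_one x⟩, hx0⟩
  obtain ⟨s, hs : x * s = f e⟩ := hfJ e hee
  have hfe : f e = x * s * e := by rw [hs, ← hflin e hee e, hee]
  refine ⟨s, fun h => hfu ?_⟩
  calc f u = f (e * u) := by rw [hu]
    _ = 0 := by rw [hflin e hee u, hfe, h, zero_mul]

end Graded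

/-- Characterizations of graded faithful idempotents in a graded von
Neumann regular graded right self-injective ring: (a) `e` is graded faithful; (b) the
two-sided ideal `ReR` is graded essential as a right ideal; (c) `Re` is a graded
faithful left ideal (`xRe ≠ 0` for nonzero homogeneous `x`); (d) `eR` is a graded
faithful right ideal (`eRx ≠ 0` for nonzero homogeneous `x`); (e) for every nonzero
graded right ideal `J` there is a nonzero graded homomorphism `eR → J` of some
degree `γ`. -/
theorem gradedFaithful_idempotent_tfae
    [DecidableEq ι] [AddCommGroup ι] [Ring R] (𝒜 : ι → AddSubgroup R) [GradedRing 𝒜]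
    (hreg : GradedVNRegular 𝒜) (hinj : GradedSelfInjective 𝒜)
    (e : R) (he : IsHomogIdem 𝒜 e) :
    List.TFAE [
      GrFaithfulIdem 𝒜 e,
      GradedEssentialIn 𝒜
        ((AddSubgroup.closure {x : R | ∃ r s : R, x = r * e * s} : AddSubgroup R) : Set R)
        Set.univ,
      ∀ x : R, IsHomog 𝒜 x → x ≠ 0 → ∃ r : R, x * r * e ≠ 0,
      ∀ x : R, IsHomog 𝒜 x → x ≠ 0 → ∃ r : R, e * r * x ≠ 0,
      ∀ J : Set R, IsGradedRightIdeal 𝒜 J → (∃ x ∈ J, x ≠ 0) →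
        ∃ γ : ι, ∃ f : R → R,
          (∀ x : R, e * x = x → f x ∈ J) ∧
          (∀ x y : R, e * x = x → e * y = y → f (x + y) = f x + f y) ∧
          (∀ x : R, e * x = x → ∀ r : R, f (x * r) = f x * r) ∧
          (∀ δ : ι, ∀ x : R, e * x = x → x ∈ 𝒜 δ → f x ∈ 𝒜 (δ + γ)) ∧
          (∃ x : R, e * x = x ∧ f x ≠ 0) ] := by
  rw [← TwoSidedIdeal.coe_span_singleton]
  tfae_have 1 → 4 := fun hf _ _ hx0 => hf.exists_mul_mul_ne_zero hreg hinj hx0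
  tfae_have 4 → 3 := fun h x hx hx0 => by
    obtain ⟨r, hr⟩ := h x hx hx0
    by_contra! hxe
    exact hr (hreg.mul_mul_eq_zero_comm hx he.1 hxe r)
  tfae_have 3 → 1 := grFaithfulIdem_of_forall_mul_mul_ne_zero he
  tfae_have 3 → 2 := gradedEssentialIn_span_of_forall_mul_mul_ne_zero
  tfae_have 2 → 1 := grFaithfulIdem_of_gradedEssentialIn_span he
  tfae_have 3 → 5 := fun h _ hJ hJ0 =>
    exists_gradedHom_ne_zero_of_forall_mul_mul_ne_zero he.2 h hJ hJ0
  tfae_have 5 → 3 := fun h _ hx hx0 => exists_mul_mul_ne_zero_of_exists_gradedHom he.2 h hx hx0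
  tfae_finish
end

section
/- Let R be a Γ-graded von Neumann regular graded right self-injective ring. The following are equivalent: (a) R is of gr-Type I, i.e. R contains a graded faithful graded abelian idempotent; (b) every nonzero graded right ideal of R contains a nonzero graded abelian (homogeneous) idempotent; (c) the two-sided ideal of R generated by all graded abelian idempotents of R is graded essential as a right ideal of R. -/
/- Setting: `Γ = ι` an additive abelian group, `R` a `ι`-graded ring with identity,
with homogeneous components the additive subgroups `𝒜 γ`. -/

variable {ι R : Type*}

section Defs
variable [DecidableEq ι] [AddCommGroup ι] [Ring R] (𝒜 : ι → AddSubgroup R) [GradedRing 𝒜]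

/-- `R` is of gr-Type I: it contains a graded faithful graded abelian idempotent. -/
def GrTypeI : Prop := ∃ e : R, GrFaithfulIdem 𝒜 e ∧ GrAbelianIdem 𝒜 e

/-- `R` is of gr-Type II: it contains a graded faithful graded directly finite idempotent
but no nonzero graded abelian idempotent. -/
def GrTypeII : Prop :=
  (∃ e : R, GrFaithfulIdem 𝒜 e ∧ GrDirFinIdem 𝒜 e) ∧ ∀ e : R, GrAbelianIdem 𝒜 e → e = 0

end Defs


open DirectSum
open scoped Classical
set_option synthInstance.maxHeartbeats 400000
set_option maxHeartbeats 1000000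

section Aux
variable {ι R : Type*} [DecidableEq ι] [AddCommGroup ι] [Ring R] (𝒜 : ι → AddSubgroup R) [GradedRing 𝒜]

/-- component as element of R -/
noncomputable def aux_comp (x : R) (γ : ι) : R := (DirectSum.decompose 𝒜 x γ : R)

lemma aux_comp_add (x y : R) (γ : ι) :
    aux_comp 𝒜 (x + y) γ = aux_comp 𝒜 x γ + aux_comp 𝒜 y γ := by
  unfold aux_comp; rw [decompose_add]; rfl

lemma aux_comp_neg (x : R) (γ : ι) : aux_comp 𝒜 (-x) γ = -aux_comp 𝒜 x γ := by
  unfold aux_comp; rw [decompose_neg]; rfl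

lemma aux_comp_zero (γ : ι) : aux_comp 𝒜 (0:R) γ = 0 := by
  unfold aux_comp; rw [decompose_zero]; rfl

lemma aux_comp_mem (x : R) (γ : ι) : aux_comp 𝒜 x γ ∈ 𝒜 γ := (decompose 𝒜 x γ).2

lemma aux_comp_same {x : R} {γ : ι} (h : x ∈ 𝒜 γ) : aux_comp 𝒜 x γ = x :=
  DirectSum.decompose_of_mem_same 𝒜 h

lemma aux_comp_ne {x : R} {γ δ : ι} (h : x ∈ 𝒜 γ) (hne : γ ≠ δ) : aux_comp 𝒜 x δ = 0 :=
  DirectSum.decompose_of_mem_ne 𝒜 h hne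

lemma aux_sum_comp (x : R) :
    ∑ γ ∈ (decompose 𝒜 x).support, aux_comp 𝒜 x γ = x :=
  DirectSum.sum_support_decompose 𝒜 x

lemma aux_comp_not_support {x : R} {γ : ι} (h : γ ∉ (decompose 𝒜 x).support) :
    aux_comp 𝒜 x γ = 0 := by
  unfold aux_comp; rw [DFinsupp.notMem_support_iff.mp h]; rfl

lemma aux_eq_zero_of_comp (x : R) (h : ∀ γ, aux_comp 𝒜 x γ = 0) : x = 0 := by
  rw [← aux_sum_comp 𝒜 x]; exact Finset.sum_eq_zero (fun i _ => h i)

lemma aux_exists_comp_ne {x : R} (h : x ≠ 0) : ∃ γ, aux_comp 𝒜 x γ ≠ 0 := by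
  by_contra hc; push_neg at hc; exact h (aux_eq_zero_of_comp 𝒜 x hc)

lemma aux_mem_unique {a : R} {γ δ : ι} (h1 : a ∈ 𝒜 γ) (h2 : a ∈ 𝒜 δ) (hne : γ ≠ δ) : a = 0 := by
  have := aux_comp_ne 𝒜 h1 hne
  rwa [aux_comp_same 𝒜 h2] at this


/-- components commute with finite sums -/
lemma aux_comp_sum {κ : Type*} (s : Finset κ) (f : κ → R) (γ : ι) :
    aux_comp 𝒜 (∑ i ∈ s, f i) γ = ∑ i ∈ s, aux_comp 𝒜 (f i) γ := by
  classical
  induction s using Finset.induction_on with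
  | empty => simp [aux_comp_zero]
  | @insert a t ha ih => rw [Finset.sum_insert ha, Finset.sum_insert ha, aux_comp_add, ih]

/-- key component computation: left multiplication by a homogeneous element -/
lemma aux_comp_mul_left {a : R} {α : ι} (ha : a ∈ 𝒜 α) (x : R) (γ : ι) :
    aux_comp 𝒜 (a * x) (α + γ) = a * aux_comp 𝒜 x γ := by
  conv_lhs => rw [← aux_sum_comp 𝒜 x]
  rw [Finset.mul_sum]
  have : ∀ δ ∈ (decompose 𝒜 x).support,
      aux_comp 𝒜 (a * aux_comp 𝒜 x δ) (α + γ) = if δ = γ then a * aux_comp 𝒜 x δ else 0 := by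
    intro δ _
    by_cases hδ : δ = γ
    · subst hδ; rw [if_pos rfl]
      exact aux_comp_same 𝒜 (SetLike.mul_mem_graded ha (aux_comp_mem 𝒜 x δ))
    · rw [if_neg hδ]
      exact aux_comp_ne 𝒜 (SetLike.mul_mem_graded ha (aux_comp_mem 𝒜 x δ))
        (by intro hc; exact hδ (by
          have : δ = γ := by
            have := add_left_cancel hc
            exact this
          exact this))
  have hsum := aux_comp_sum 𝒜 (decompose 𝒜 x).support (fun δ => a * aux_comp 𝒜 x δ) (α + γ)
  rw [hsum, Finset.sum_congr rfl this]
  by_cases hγ : γ ∈ (decompose 𝒜 x).support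
  · rw [Finset.sum_ite_eq' _ γ (fun δ => a * aux_comp 𝒜 x δ), if_pos hγ]
  · rw [Finset.sum_ite_eq' _ γ (fun δ => a * aux_comp 𝒜 x δ), if_neg hγ,
      aux_comp_not_support 𝒜 hγ, mul_zero]

lemma aux_comp_mul_right {b : R} {β : ι} (hb : b ∈ 𝒜 β) (x : R) (γ : ι) :
    aux_comp 𝒜 (x * b) (γ + β) = aux_comp 𝒜 x γ * b := by
  conv_lhs => rw [← aux_sum_comp 𝒜 x]
  rw [Finset.sum_mul]
  have : ∀ δ ∈ (decompose 𝒜 x).support,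
      aux_comp 𝒜 (aux_comp 𝒜 x δ * b) (γ + β) = if δ = γ then aux_comp 𝒜 x δ * b else 0 := by
    intro δ _
    by_cases hδ : δ = γ
    · subst hδ; rw [if_pos rfl]
      exact aux_comp_same 𝒜 (SetLike.mul_mem_graded (aux_comp_mem 𝒜 x δ) hb)
    · rw [if_neg hδ]
      exact aux_comp_ne 𝒜 (SetLike.mul_mem_graded (aux_comp_mem 𝒜 x δ) hb)
        (fun hc => hδ (add_right_cancel hc))
  have hsum := aux_comp_sum 𝒜 (decompose 𝒜 x).support (fun δ => aux_comp 𝒜 x δ * b) (γ + β)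
  rw [hsum, Finset.sum_congr rfl this]
  by_cases hγ : γ ∈ (decompose 𝒜 x).support
  · rw [Finset.sum_ite_eq' _ γ (fun δ => aux_comp 𝒜 x δ * b), if_pos hγ]
  · rw [Finset.sum_ite_eq' _ γ (fun δ => aux_comp 𝒜 x δ * b), if_neg hγ,
      aux_comp_not_support 𝒜 hγ, zero_mul]

lemma aux_homog_idem_deg0 {e : R} (h : IsHomog 𝒜 e) (hee : e * e = e) : e ∈ 𝒜 (0:ι) := by
  obtain ⟨γ, hγ⟩ := h
  by_cases hg : γ = 0
  · rwa [hg] at hγ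
  · have h2 : e ∈ 𝒜 (γ + γ) := by rw [← hee]; exact SetLike.mul_mem_graded hγ hγ
    have hne : γ ≠ γ + γ := by
      intro hc
      apply hg
      have : γ + 0 = γ + γ := by rw [add_zero]; exact hc
      exact (add_left_cancel this).symm
    have : e = 0 := aux_mem_unique 𝒜 hγ h2 hne
    rw [this]; exact zero_mem _

lemma aux_homog_inner (hreg : GradedVNRegular 𝒜) {z : R} {ζ : ι} (hz : z ∈ 𝒜 ζ) :
    ∃ b, b ∈ 𝒜 (-ζ) ∧ z * b * z = z := by
  obtain ⟨b, hb⟩ := hreg z ⟨ζ, hz⟩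
  refine ⟨aux_comp 𝒜 b (-ζ), aux_comp_mem 𝒜 b (-ζ), ?_⟩
  have h1 : aux_comp 𝒜 (b * z) (-ζ + ζ) = aux_comp 𝒜 b (-ζ) * z :=
    aux_comp_mul_right 𝒜 hz b (-ζ)
  have h2 : aux_comp 𝒜 (z * (b * z)) (ζ + (-ζ + ζ)) = z * aux_comp 𝒜 (b * z) (-ζ + ζ) :=
    aux_comp_mul_left 𝒜 hz (b * z) (-ζ + ζ)
  rw [h1] at h2
  have h3 : z * (b * z) = z := by rw [← mul_assoc]; exact hb
  have h4 : (ζ + (-ζ + ζ)) = ζ := by rw [neg_add_cancel, add_zero]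
  rw [h3, h4, aux_comp_same 𝒜 hz] at h2
  rw [mul_assoc]; exact h2.symm

lemma aux_principal {x : R} {ζ : ι} (hx : x ∈ 𝒜 ζ) :
    IsGradedRightIdeal 𝒜 {y | ∃ r, y = x * r} := by
  refine ⟨⟨⟨0, (mul_zero x).symm⟩, ?_, ?_⟩, ?_⟩
  · rintro _ ⟨r, rfl⟩ _ ⟨r', rfl⟩; exact ⟨r + r', (mul_add x r r').symm⟩
  · rintro _ ⟨r, rfl⟩ t; exact ⟨r * t, mul_assoc x r t⟩
  · rintro _ ⟨r, rfl⟩ γ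
    refine ⟨aux_comp 𝒜 r (-ζ + γ), ?_⟩
    have := aux_comp_mul_left 𝒜 hx r (-ζ + γ)
    rw [add_neg_cancel_left] at this
    exact this

lemma aux_inter {J K : Set R} (hJ : IsGradedRightIdeal 𝒜 J) (hK : IsGradedRightIdeal 𝒜 K) :
    IsGradedRightIdeal 𝒜 (J ∩ K) := by
  refine ⟨⟨⟨hJ.1.1, hK.1.1⟩, ?_, ?_⟩, ?_⟩
  · rintro x ⟨h1, h2⟩ y ⟨h3, h4⟩; exact ⟨hJ.1.2.1 x h1 y h3, hK.1.2.1 x h2 y h4⟩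
  · rintro x ⟨h1, h2⟩ r; exact ⟨hJ.1.2.2 x h1 r, hK.1.2.2 x h2 r⟩
  · rintro x ⟨h1, h2⟩ γ; exact ⟨hJ.2 x h1 γ, hK.2 x h2 γ⟩

lemma aux_homog_elem {J : Set R} (hJ : IsGradedRightIdeal 𝒜 J) {x : R} (hx : x ∈ J)
    (hx0 : x ≠ 0) : ∃ z ζ, z ∈ 𝒜 ζ ∧ z ≠ 0 ∧ z ∈ J := by
  obtain ⟨γ, hγ⟩ := aux_exists_comp_ne 𝒜 hx0
  exact ⟨aux_comp 𝒜 x γ, γ, aux_comp_mem 𝒜 x γ, hγ, hJ.2 x hx γ⟩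

lemma aux_idem_of_homog (hreg : GradedVNRegular 𝒜) {J : Set R} (hJ : IsGradedRightIdeal 𝒜 J)
    {z : R} {ζ : ι} (hz : z ∈ 𝒜 ζ) (hzJ : z ∈ J) (hz0 : z ≠ 0) :
    ∃ g, g ∈ 𝒜 (0:ι) ∧ g * g = g ∧ g ∈ J ∧ g * z = z ∧ g ≠ 0 := by
  obtain ⟨b, hb, hzbz⟩ := aux_homog_inner 𝒜 hreg hz
  refine ⟨z * b, ?_, ?_, hJ.1.2.2 z hzJ b, hzbz, ?_⟩
  · have := SetLike.mul_mem_graded hz hb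
    rwa [add_neg_cancel] at this
  · calc z * b * (z * b) = (z * b * z) * b := by rw [mul_assoc (z*b) z b]
    _ = z * b := by rw [hzbz]
  · intro hc
    rw [hc, zero_mul] at hzbz
    exact hz0 hzbz.symm

lemma aux_closure_graded (S : Set R)
    (hmul : ∀ x ∈ S, ∀ r : R, x * r ∈ AddSubgroup.closure S)
    (hcomp : ∀ x ∈ S, ∀ γ : ι, aux_comp 𝒜 x γ ∈ AddSubgroup.closure S) :
    IsGradedRightIdeal 𝒜 (AddSubgroup.closure S : Set R) := by
  constructor
  constructor
  · exact (AddSubgroup.closure S).zero_mem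
  constructor
  · intro x hx y hy; exact (AddSubgroup.closure S).add_mem hx hy
  · intro x hx r
    refine AddSubgroup.closure_induction ?_ ?_ ?_ ?_ hx
    · intro y hy; exact hmul y hy r
    · rw [zero_mul]; exact (AddSubgroup.closure S).zero_mem
    · intro a b _ _ ha hb; rw [add_mul]; exact (AddSubgroup.closure S).add_mem ha hb
    · intro a _ ha; rw [neg_mul]; exact (AddSubgroup.closure S).neg_mem ha
  · intro x hx γ
    show aux_comp 𝒜 x γ ∈ AddSubgroup.closure S
    refine AddSubgroup.closure_induction (p := fun y _ => aux_comp 𝒜 y γ ∈ AddSubgroup.closure S) ?_ ?_ ?_ ?_ hx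
    · intro y hy; exact hcomp y hy γ
    · show aux_comp 𝒜 (0:R) γ ∈ AddSubgroup.closure S
      rw [aux_comp_zero]; exact (AddSubgroup.closure S).zero_mem
    · intro a b _ _ ha hb
      show aux_comp 𝒜 (a + b) γ ∈ AddSubgroup.closure S
      rw [aux_comp_add]; exact (AddSubgroup.closure S).add_mem ha hb
    · intro a _ ha
      show aux_comp 𝒜 (-a) γ ∈ AddSubgroup.closure S
      rw [aux_comp_neg]; exact (AddSubgroup.closure S).neg_mem ha

lemma aux_nonsing (hreg : GradedVNRegular 𝒜) {U : Set R} (hU : IsGradedRightIdeal 𝒜 U)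
    (hess : ∀ K : Set R, IsGradedRightIdeal 𝒜 K → (∃ x ∈ K, x ≠ 0) →
      ∃ x, (x ∈ U ∧ x ∈ K) ∧ x ≠ 0)
    (z : R) (hz : ∀ j ∈ U, z * j = 0) : z = 0 := by
  by_contra hz0
  obtain ⟨γ, hγ⟩ := aux_exists_comp_ne 𝒜 hz0
  set z₁ := aux_comp 𝒜 z γ with hz₁def
  have hz₁mem : z₁ ∈ 𝒜 γ := aux_comp_mem 𝒜 z γ
  have hkill : ∀ j ∈ U, z₁ * j = 0 := by
    intro j hj
    have hδ : ∀ δ, z₁ * aux_comp 𝒜 j δ = 0 := by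
      intro δ
      have h0 : z * aux_comp 𝒜 j δ = 0 := hz _ (hU.2 j hj δ)
      have h1 : aux_comp 𝒜 (z * aux_comp 𝒜 j δ) (γ + δ) = z₁ * aux_comp 𝒜 j δ :=
        aux_comp_mul_right 𝒜 (aux_comp_mem 𝒜 j δ) z γ
      rw [h0, aux_comp_zero] at h1
      exact h1.symm
    conv_lhs => rw [← aux_sum_comp 𝒜 j, Finset.mul_sum]
    exact Finset.sum_eq_zero (fun δ _ => hδ δ)
  obtain ⟨b, hbmem, hbz⟩ := aux_homog_inner 𝒜 hreg hz₁mem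
  set e₀ := b * z₁ with he₀def
  have he₀mem : e₀ ∈ 𝒜 (0:ι) := by
    have := SetLike.mul_mem_graded hbmem hz₁mem
    rwa [neg_add_cancel] at this
  have hz₁e₀ : z₁ * e₀ = z₁ := by rw [he₀def, ← mul_assoc]; exact hbz
  have he₀ne : e₀ ≠ 0 := by
    intro hc; rw [hc, mul_zero] at hz₁e₀; exact hγ hz₁e₀.symm
  have he₀e₀ : e₀ * e₀ = e₀ := by
    calc e₀ * e₀ = b * (z₁ * e₀) := by rw [he₀def, mul_assoc]
    _ = e₀ := by rw [hz₁e₀]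
  obtain ⟨w, ⟨hwU, hwK⟩, hw0⟩ := hess _ (aux_principal 𝒜 he₀mem)
    ⟨e₀, ⟨1, (mul_one e₀).symm⟩, he₀ne⟩
  obtain ⟨r, rfl⟩ := hwK
  apply hw0
  have h2 : z₁ * (e₀ * r) = 0 := hkill _ hwU
  calc e₀ * r = b * (z₁ * (e₀ * r)) := by
        rw [← mul_assoc, ← he₀def, ← mul_assoc, he₀e₀]
  _ = 0 := by rw [h2, mul_zero]

lemma aux_neg_mem {T : Set R} (hT : IsGradedRightIdeal 𝒜 T) {x : R} (hx : x ∈ T) : -x ∈ T := by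
  have := hT.1.2.2 x hx (-1); rwa [mul_neg_one] at this

lemma aux_sub_mem {T : Set R} (hT : IsGradedRightIdeal 𝒜 T) {x y : R} (hx : x ∈ T)
    (hy : y ∈ T) : x - y ∈ T := by
  rw [sub_eq_add_neg]; exact hT.1.2.1 x hx _ (aux_neg_mem 𝒜 hT hy)

lemma aux_sum_ideal {T C : Set R} (hT : IsGradedRightIdeal 𝒜 T) (hC : IsGradedRightIdeal 𝒜 C) :
    IsGradedRightIdeal 𝒜 {x | ∃ t ∈ T, ∃ c ∈ C, x = t + c} := by
  refine ⟨⟨⟨0, hT.1.1, 0, hC.1.1, (add_zero 0).symm⟩, ?_, ?_⟩, ?_⟩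
  · rintro _ ⟨t, ht, c, hc, rfl⟩ _ ⟨t', ht', c', hc', rfl⟩
    exact ⟨t + t', hT.1.2.1 t ht t' ht', c + c', hC.1.2.1 c hc c' hc',
      by rw [add_add_add_comm]⟩
  · rintro _ ⟨t, ht, c, hc, rfl⟩ r
    exact ⟨t * r, hT.1.2.2 t ht r, c * r, hC.1.2.2 c hc r, add_mul t c r⟩
  · rintro _ ⟨t, ht, c, hc, rfl⟩ γ
    exact ⟨aux_comp 𝒜 t γ, hT.2 t ht γ, aux_comp 𝒜 c γ, hC.2 c hc γ,
      aux_comp_add 𝒜 t c γ⟩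

lemma aux_proj (hinj : GradedSelfInjective 𝒜) (T C : Set R)
    (hT : IsGradedRightIdeal 𝒜 T) (hC : IsGradedRightIdeal 𝒜 C)
    (hTC : ∀ x, x ∈ T → x ∈ C → x = 0) :
    ∃ e, e ∈ 𝒜 (0:ι) ∧ (∀ t ∈ T, e * t = t) ∧ (∀ c ∈ C, e * c = 0) := by
  classical
  set U : Set R := {x | ∃ t ∈ T, ∃ c ∈ C, x = t + c} with hUdef
  have hUgr : IsGradedRightIdeal 𝒜 U := aux_sum_ideal 𝒜 hT hC
  have huniq : ∀ t ∈ T, ∀ c ∈ C, ∀ t' ∈ T, ∀ c' ∈ C, t + c = t' + c' → t = t' := by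
    intro t ht c hc t' ht' c' hc' h
    have h1 : t - t' = c' - c := by
      rw [sub_eq_sub_iff_add_eq_add, h, add_comm]
    have h2 : t - t' ∈ T := aux_sub_mem 𝒜 hT ht ht'
    have h3 : t - t' ∈ C := by rw [h1]; exact aux_sub_mem 𝒜 hC hc' hc
    have := hTC _ h2 h3
    rwa [sub_eq_zero] at this
  set φ : R → R := fun x => if h : ∃ t ∈ T, ∃ c ∈ C, x = t + c then h.choose else 0 with hφdef
  have hφ : ∀ x, ∀ h : x ∈ U, φ x ∈ T ∧ ∃ c ∈ C, x = φ x + c := by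
    intro x h
    have : φ x = (h : ∃ t ∈ T, ∃ c ∈ C, x = t + c).choose := dif_pos h
    rw [this]
    exact ⟨h.choose_spec.1, h.choose_spec.2⟩
  have hφval : ∀ t ∈ T, ∀ c ∈ C, φ (t + c) = t := by
    intro t ht c hc
    have hx : (t + c) ∈ U := ⟨t, ht, c, hc, rfl⟩
    obtain ⟨h1, c', hc', h2⟩ := hφ _ hx
    exact (huniq _ h1 _ hc' _ ht _ hc h2.symm)
  have cond1 : ∀ x ∈ U, ∀ y ∈ U, φ (x + y) = φ x + φ y := by
    rintro x hx y hy
    obtain ⟨t, ht, c, hc, rfl⟩ := hx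
    obtain ⟨t', ht', c', hc', rfl⟩ := hy
    rw [hφval t ht c hc, hφval t' ht' c' hc', add_add_add_comm,
      hφval (t + t') (hT.1.2.1 t ht t' ht') (c + c') (hC.1.2.1 c hc c' hc')]
  have cond2 : ∀ x ∈ U, ∀ r : R, φ (x * r) = φ x * r := by
    rintro x hx r
    obtain ⟨t, ht, c, hc, rfl⟩ := hx
    rw [hφval t ht c hc, add_mul, hφval (t * r) (hT.1.2.2 t ht r) (c * r) (hC.1.2.2 c hc r)]
  have cond3 : ∀ δ : ι, ∀ x ∈ U, x ∈ 𝒜 δ → φ x ∈ 𝒜 ((0:ι) + δ) := by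
    rintro δ x hx hxδ
    obtain ⟨t, ht, c, hc, rfl⟩ := hx
    rw [hφval t ht c hc]
    have hcompt : ∀ γ', γ' ≠ δ → aux_comp 𝒜 t γ' = 0 := by
      intro γ' hne
      have h0 : aux_comp 𝒜 (t + c) γ' = 0 := aux_comp_ne 𝒜 hxδ (fun hc' => hne hc'.symm)
      rw [aux_comp_add] at h0
      have h1 : aux_comp 𝒜 t γ' = -aux_comp 𝒜 c γ' := by
        rw [eq_neg_iff_add_eq_zero]; exact h0
      have h2 : aux_comp 𝒜 t γ' ∈ T := hT.2 t ht γ'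
      have h3 : aux_comp 𝒜 t γ' ∈ C := by
        rw [h1]; exact aux_neg_mem 𝒜 hC (hC.2 c hc γ')
      exact hTC _ h2 h3
    have : t ∈ 𝒜 δ := by
      rw [← aux_sum_comp 𝒜 t]
      refine AddSubgroup.sum_mem _ (fun γ' _ => ?_)
      by_cases hg : γ' = δ
      · subst hg; exact aux_comp_mem 𝒜 t γ'
      · rw [hcompt γ' hg]; exact zero_mem _
    rwa [zero_add]
  obtain ⟨e, he0, hee⟩ := hinj U hUgr 0 φ cond1 cond2 cond3
  refine ⟨e, he0, ?_, ?_⟩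
  · intro t ht
    have hmem : t ∈ U := ⟨t, ht, 0, hC.1.1, (add_zero t).symm⟩
    have h1 : φ t = e * t := hee t hmem
    have h2 : φ t = t := by
      conv_lhs => rw [show t = t + 0 by rw [add_zero]]
      exact hφval t ht 0 hC.1.1
    rw [← h1, h2]
  · intro c hc
    have hmem : c ∈ U := ⟨0, hT.1.1, c, hc, (zero_add c).symm⟩
    have h1 : φ c = e * c := hee c hmem
    have h2 : φ c = 0 := by
      conv_lhs => rw [show c = 0 + c by rw [zero_add]]
      exact hφval 0 hT.1.1 c hc
    rw [← h1, h2]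

lemma aux_cover (hreg : GradedVNRegular 𝒜) (hinj : GradedSelfInjective 𝒜) {f : R}
    (hf0 : f ∈ 𝒜 (0:ι)) :
    ∃ u, u ∈ 𝒜 (0:ι) ∧ u * u = u ∧ (∀ r, u * r = r * u) ∧
      (∀ r s : R, u * (r * (f * s)) = r * (f * s)) ∧
      (∀ t, (∀ s, f * (s * t) = 0) → u * t = 0) := by
  classical
  set Sf : Set R := {x | ∃ r s : R, x = r * (f * s)} with hSfdef
  set T : Set R := (AddSubgroup.closure Sf : Set R) with hTdef
  set T' : Set R := {t | ∀ s, f * (s * t) = 0} with hT'def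
  have hSfT : ∀ r s : R, r * (f * s) ∈ T := fun r s => AddSubgroup.subset_closure ⟨r, s, rfl⟩
  have hTgr : IsGradedRightIdeal 𝒜 T := by
    refine aux_closure_graded 𝒜 Sf ?_ ?_
    · rintro _ ⟨r, s, rfl⟩ t
      have : r * (f * s) * t = r * (f * (s * t)) := by simp only [mul_assoc]
      rw [this]; exact hSfT r (s * t)
    · rintro _ ⟨r, s, rfl⟩ γ
      have hexp : r * (f * s) = ∑ α ∈ (decompose 𝒜 r).support, aux_comp 𝒜 r α * (f * s) := by
        rw [← Finset.sum_mul, aux_sum_comp]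
      rw [hexp, aux_comp_sum]
      refine AddSubgroup.sum_mem _ (fun α _ => ?_)
      have h1 : aux_comp 𝒜 (aux_comp 𝒜 r α * (f * s)) (α + (-α + γ))
          = aux_comp 𝒜 r α * aux_comp 𝒜 (f * s) (-α + γ) :=
        aux_comp_mul_left 𝒜 (aux_comp_mem 𝒜 r α) (f * s) (-α + γ)
      rw [add_neg_cancel_left] at h1
      have h2 : aux_comp 𝒜 (f * s) ((0:ι) + (-α + γ)) = f * aux_comp 𝒜 s (-α + γ) :=
        aux_comp_mul_left 𝒜 hf0 s (-α + γ)
      rw [zero_add] at h2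
      rw [h1, h2]
      exact hSfT _ _
  have hTleft : ∀ a : R, ∀ x ∈ T, a * x ∈ T := by
    intro a x hx
    refine AddSubgroup.closure_induction (p := fun y _ => a * y ∈ T) ?_ ?_ ?_ ?_ hx
    · rintro _ ⟨r, s, rfl⟩
      have : a * (r * (f * s)) = (a * r) * (f * s) := by rw [mul_assoc]
      rw [this]; exact hSfT _ _
    · show a * 0 ∈ T
      rw [mul_zero]; exact hTgr.1.1
    · intro x' y' _ _ hax hay
      show a * (x' + y') ∈ T
      rw [mul_add]; exact hTgr.1.2.1 _ hax _ hay
    · intro x' _ hax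
      show a * (-x') ∈ T
      rw [mul_neg]; exact (AddSubgroup.closure Sf).neg_mem hax
  have hT'zero : (0:R) ∈ T' := fun s => by rw [mul_zero, mul_zero]
  have hT'gr : IsGradedRightIdeal 𝒜 T' := by
    refine ⟨⟨hT'zero, ?_, ?_⟩, ?_⟩
    · intro x hx y hy s
      have : s * (x + y) = s * x + s * y := mul_add s x y
      rw [this, mul_add, hx s, hy s, add_zero]
    · intro x hx r s
      have : f * (s * (x * r)) = (f * (s * x)) * r := by simp only [mul_assoc]
      rw [this, hx s, zero_mul]
    · intro t ht γ s
      show f * (s * aux_comp 𝒜 t γ) = 0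
      have hexp : s = ∑ σ ∈ (decompose 𝒜 s).support, aux_comp 𝒜 s σ := (aux_sum_comp 𝒜 s).symm
      rw [hexp, Finset.sum_mul, Finset.mul_sum]
      refine Finset.sum_eq_zero (fun σ _ => ?_)
      have h1 : aux_comp 𝒜 (aux_comp 𝒜 s σ * t) (σ + γ) = aux_comp 𝒜 s σ * aux_comp 𝒜 t γ :=
        aux_comp_mul_left 𝒜 (aux_comp_mem 𝒜 s σ) t γ
      have h2 : aux_comp 𝒜 (f * (aux_comp 𝒜 s σ * t)) ((0:ι) + (σ + γ))
          = f * aux_comp 𝒜 (aux_comp 𝒜 s σ * t) (σ + γ) :=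
        aux_comp_mul_left 𝒜 hf0 _ (σ + γ)
      rw [ht (aux_comp 𝒜 s σ), aux_comp_zero, h1] at h2
      exact h2.symm
  have hT'left : ∀ a : R, ∀ x ∈ T', a * x ∈ T' := by
    intro a x hx s
    have : f * (s * (a * x)) = f * ((s * a) * x) := by simp only [mul_assoc]
    rw [this]; exact hx (s * a)
  have hTkill : ∀ t ∈ T, ∀ z ∈ T', t * z = 0 := by
    intro t ht z hz
    refine AddSubgroup.closure_induction (p := fun y _ => y * z = 0) ?_ ?_ ?_ ?_ ht
    · rintro _ ⟨r, s, rfl⟩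
      have : r * (f * s) * z = r * (f * (s * z)) := by simp only [mul_assoc]
      rw [this, hz s, mul_zero]
    · show (0:R) * z = 0
      rw [zero_mul]
    · intro a b _ _ ha hb
      show (a + b) * z = 0
      rw [add_mul, ha, hb, add_zero]
    · intro a _ ha
      show (-a) * z = 0
      rw [neg_mul, ha, neg_zero]
  have hTT' : ∀ x, x ∈ T → x ∈ T' → x = 0 := by
    intro x hxT hxT'
    refine aux_eq_zero_of_comp 𝒜 x (fun γ => ?_)
    have hzT : aux_comp 𝒜 x γ ∈ T := hTgr.2 x hxT γ
    have hzT' : aux_comp 𝒜 x γ ∈ T' := hT'gr.2 x hxT' γ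
    obtain ⟨b, hb⟩ := hreg (aux_comp 𝒜 x γ) ⟨γ, aux_comp_mem 𝒜 x γ⟩
    have h1 : aux_comp 𝒜 x γ * b ∈ T := hTgr.1.2.2 _ hzT b
    have h2 : (aux_comp 𝒜 x γ * b) * aux_comp 𝒜 x γ = 0 := hTkill _ h1 _ hzT'
    rw [h2] at hb; exact hb.symm
  set U : Set R := {x | ∃ t ∈ T, ∃ c ∈ T', x = t + c} with hUdef
  have hUgr : IsGradedRightIdeal 𝒜 U := aux_sum_ideal 𝒜 hTgr hT'gr
  have hUess : ∀ K : Set R, IsGradedRightIdeal 𝒜 K → (∃ x ∈ K, x ≠ 0) →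
      ∃ x, (x ∈ U ∧ x ∈ K) ∧ x ≠ 0 := by
    intro K hK ⟨x₀, hx₀K, hx₀0⟩
    obtain ⟨z₀, ζ, hz₀mem, hz₀0, hz₀K⟩ := aux_homog_elem 𝒜 hK hx₀K hx₀0
    obtain ⟨g, hg0, hgg, hgK, hgz, hgne⟩ := aux_idem_of_homog 𝒜 hreg hK hz₀mem hz₀K hz₀0
    by_cases h1 : ∃ r s, g * (r * (f * (s * g))) ≠ 0
    · obtain ⟨r, s, hrs⟩ := h1
      refine ⟨g * (r * (f * (s * g))), ⟨⟨g * (r * (f * (s * g))), ?_, 0, hT'zero,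
        (add_zero _).symm⟩, hK.1.2.2 g hgK _⟩, hrs⟩
      have : g * (r * (f * (s * g))) = (g * r) * (f * (s * g)) := by rw [mul_assoc]
      rw [this]; exact hSfT _ _
    · push_neg at h1
      by_cases h2 : ∃ s, f * (s * g) ≠ 0
      · exfalso
        obtain ⟨s, hs⟩ := h2
        have hσ : ∃ σ, f * (aux_comp 𝒜 s σ * g) ≠ 0 := by
          by_contra hc; push_neg at hc
          apply hs
          conv_lhs => rw [show s = ∑ σ ∈ (decompose 𝒜 s).support, aux_comp 𝒜 s σ from
            (aux_sum_comp 𝒜 s).symm]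
          rw [Finset.sum_mul, Finset.mul_sum]
          exact Finset.sum_eq_zero (fun σ _ => hc σ)
        obtain ⟨σ, hw0⟩ := hσ
        set w := f * (aux_comp 𝒜 s σ * g) with hwdef
        have hwmem : w ∈ 𝒜 ((0:ι) + (σ + 0)) :=
          SetLike.mul_mem_graded hf0 (SetLike.mul_mem_graded (aux_comp_mem 𝒜 s σ) hg0)
        have hwRw : ∀ r, w * (r * w) = 0 := by
          intro r
          have : w * (r * w) = f * (aux_comp 𝒜 s σ * (g * (r * (f * (aux_comp 𝒜 s σ * g))))) := by
            rw [hwdef]; simp only [mul_assoc]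
          rw [this, h1 r (aux_comp 𝒜 s σ), mul_zero, mul_zero]
        obtain ⟨c, hc⟩ := hreg w ⟨_, hwmem⟩
        rw [mul_assoc, hwRw c] at hc
        exact hw0 hc.symm
      · push_neg at h2
        exact ⟨g, ⟨⟨0, hTgr.1.1, g, h2, (zero_add g).symm⟩, hgK⟩, hgne⟩
  obtain ⟨u, hu0, huT, huT'⟩ := aux_proj 𝒜 hinj T T' hTgr hT'gr hTT'
  have huu : u * u = u := by
    have := aux_nonsing 𝒜 hreg hUgr hUess (u * u - u) ?_
    · rw [sub_eq_zero] at this; exact this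
    · rintro _ ⟨t, ht, c, hc, rfl⟩
      have h1 : u * (t + c) = t := by rw [mul_add, huT t ht, huT' c hc, add_zero]
      rw [sub_mul, mul_assoc, h1, huT t ht, sub_self]
  have hucen : ∀ r, u * r = r * u := by
    intro r
    have := aux_nonsing 𝒜 hreg hUgr hUess (u * r - r * u) ?_
    · rw [sub_eq_zero] at this; exact this
    · rintro _ ⟨t, ht, c, hc, rfl⟩
      have h1 : u * (t + c) = t := by rw [mul_add, huT t ht, huT' c hc, add_zero]
      have h2 : (u * r) * (t + c) = r * t := by
        rw [mul_assoc, mul_add, mul_add]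
        rw [huT _ (hTleft r t ht), huT' _ (hT'left r c hc), add_zero]
      have h3 : (r * u) * (t + c) = r * t := by rw [mul_assoc, h1]
      rw [sub_mul, h2, h3, sub_self]
  exact ⟨u, hu0, huu, hucen, fun r s => huT _ (hSfT r s), fun t ht => huT' t ht⟩

lemma aux_corner_left {e x : R} (hee : e * e = e) (hx : e * x * e = x) : e * x = x := by
  conv_lhs => rw [← hx]
  rw [show e * (e * x * e) = ((e * e) * x) * e by simp only [mul_assoc], hee, hx]

lemma aux_corner_right {e x : R} (hee : e * e = e) (hx : e * x * e = x) : x * e = x := by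
  conv_lhs => rw [← hx]
  rw [show (e * x * e) * e = (e * x) * (e * e) by simp only [mul_assoc], hee, hx]

/-- In a graded regular ring, a graded abelian idempotent has no nonzero homogeneous
square-zero element in its corner. -/
lemma aux_abelian_no_sqzero (hreg : GradedVNRegular 𝒜) {e : R} (he : GrAbelianIdem 𝒜 e)
    {z : R} (hzh : IsHomog 𝒜 z) (hz : e * z * e = z) (hzz : z * z = 0) : z = 0 := by
  obtain ⟨ζ, hζ⟩ := hzh
  have hee : e * e = e := he.1.2
  have he0 : e ∈ 𝒜 (0:ι) := aux_homog_idem_deg0 𝒜 he.1.1 hee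
  have hez : e * z = z := aux_corner_left hee hz
  have hze : z * e = z := aux_corner_right hee hz
  obtain ⟨b, hbm, hbz⟩ := aux_homog_inner 𝒜 hreg hζ
  set c : R := e * b * e with hcdef
  have hcm : c ∈ 𝒜 ((0:ι) + -ζ + 0) :=
    SetLike.mul_mem_graded (SetLike.mul_mem_graded he0 hbm) he0
  have hzcz : z * c * z = z := by
    have : z * (e * b * e) * z = (z * e) * b * (e * z) := by simp only [mul_assoc]
    rw [hcdef, this, hze, hez, hbz]
  set f' : R := z * c with hf'def
  have hf'm : f' ∈ 𝒜 (ζ + ((0:ι) + -ζ + 0)) := SetLike.mul_mem_graded hζ hcm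
  have hf'idem : f' * f' = f' := by
    rw [hf'def, show z * c * (z * c) = (z * c * z) * c by simp only [mul_assoc], hzcz]
  have hce : c * e = c := by
    rw [hcdef, show e * b * e * e = e * b * (e * e) by simp only [mul_assoc], hee]
  have hf'corner : e * f' * e = f' := by
    rw [hf'def, show e * (z * c) * e = (e * z) * (c * e) by simp only [mul_assoc], hez, hce]
  have hcomm : f' * z = z * f' := he.2 f' ⟨_, hf'm⟩ hf'corner hf'idem z hz
  have h1 : f' * z = z := by rw [hf'def]; exact hzcz
  have h2 : z * f' = 0 := by
    rw [hf'def, ← mul_assoc, hzz, zero_mul]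
  rw [h1, h2] at hcomm
  exact hcomm

lemma aux_abelian_of_no_sqzero {e : R} (he0 : e ∈ 𝒜 (0:ι)) (hee : e * e = e)
    (H : ∀ z : R, IsHomog 𝒜 z → e * z * e = z → z * z = 0 → z = 0) :
    GrAbelianIdem 𝒜 e := by
  refine ⟨⟨⟨0, he0⟩, hee⟩, ?_⟩
  intro f hf hfc hff x hx
  have hef : e * f = f := aux_corner_left hee hfc
  have hfe : f * e = f := aux_corner_right hee hfc
  have hf0 : f ∈ 𝒜 (0:ι) := aux_homog_idem_deg0 𝒜 hf hff
  have hcomp : ∀ γ, f * aux_comp 𝒜 x γ = aux_comp 𝒜 x γ * f := by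
    intro γ
    set y := aux_comp 𝒜 x γ with hydef
    have hym : y ∈ 𝒜 γ := aux_comp_mem 𝒜 x γ
    have hyc : e * y * e = y := by
      have hxe : aux_comp 𝒜 (x * e) (γ + 0) = y * e := aux_comp_mul_right 𝒜 he0 x γ
      have hexe : aux_comp 𝒜 (e * (x * e)) ((0:ι) + (γ + 0)) = e * aux_comp 𝒜 (x * e) (γ + 0) :=
        aux_comp_mul_left 𝒜 he0 (x * e) (γ + 0)
      rw [hxe] at hexe
      have hassoc : e * (x * e) = x := by rw [← mul_assoc]; exact hx
      rw [hassoc] at hexe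
      have hγ : (0:ι) + (γ + 0) = γ := by rw [zero_add, add_zero]
      rw [hγ] at hexe
      rw [← mul_assoc] at hexe
      rw [← hydef] at hexe
      exact hexe.symm
    have hye : y * e = y := aux_corner_right hee hyc
    have hey : e * y = y := aux_corner_left hee hyc
    -- u₁ = f * y * (e - f)
    have hu1m : f * y * (e - f) ∈ 𝒜 ((0:ι) + γ + 0) :=
      SetLike.mul_mem_graded (SetLike.mul_mem_graded hf0 hym) (sub_mem he0 hf0)
    have hemf : (e - f) * e = e - f := by rw [sub_mul, hee, hfe]
    have heemf : e * (e - f) = e - f := by rw [mul_sub, hee, hef]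
    have hu1c : e * (f * y * (e - f)) * e = f * y * (e - f) := by
      rw [show e * (f * y * (e - f)) * e = ((e * f) * y) * ((e - f) * e) by
        simp only [mul_assoc], hef, hemf]
    have hu1sq : (f * y * (e - f)) * (f * y * (e - f)) = 0 := by
      have hmf : (e - f) * f = 0 := by rw [sub_mul, hef, hff, sub_self]
      rw [show (f * y * (e - f)) * (f * y * (e - f))
          = (f * y) * (((e - f) * f) * (y * (e - f))) by simp only [mul_assoc],
        hmf, zero_mul, mul_zero]
    have hu1 : f * y * (e - f) = 0 := H _ ⟨_, hu1m⟩ hu1c hu1sq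
    -- u₂ = (e - f) * y * f
    have hu2m : (e - f) * y * f ∈ 𝒜 ((0:ι) + γ + 0) :=
      SetLike.mul_mem_graded (SetLike.mul_mem_graded (sub_mem he0 hf0) hym) hf0
    have hu2c : e * ((e - f) * y * f) * e = (e - f) * y * f := by
      rw [show e * ((e - f) * y * f) * e = ((e * (e - f)) * y) * (f * e) by
        simp only [mul_assoc], heemf, hfe]
    have hu2sq : ((e - f) * y * f) * ((e - f) * y * f) = 0 := by
      have hmf : f * (e - f) = 0 := by rw [mul_sub, hfe, hff, sub_self]
      rw [show ((e - f) * y * f) * ((e - f) * y * f)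
          = ((e - f) * y) * ((f * (e - f)) * (y * f)) by simp only [mul_assoc],
        hmf, zero_mul, mul_zero]
    have hu2 : (e - f) * y * f = 0 := H _ ⟨_, hu2m⟩ hu2c hu2sq
    have hr1 : f * y = f * y * f := by
      have := sub_eq_zero.mp (by
        rw [show f * y * (e - f) = f * y * e - f * y * f by rw [mul_sub]] at hu1
        exact hu1)
      rw [mul_assoc, hye] at this
      exact this
    have hr2 : y * f = f * y * f := by
      have := sub_eq_zero.mp (by
        rw [show (e - f) * y * f = e * y * f - f * y * f by rw [sub_mul, sub_mul]] at hu2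
        exact hu2)
      rw [hey] at this
      exact this
    rw [hr1, hr2]
  conv_lhs => rw [← aux_sum_comp 𝒜 x, Finset.mul_sum]
  conv_rhs => rw [← aux_sum_comp 𝒜 x, Finset.sum_mul]
  exact Finset.sum_congr rfl (fun γ _ => hcomp γ)

/-- Corner transfer: if `f` is a graded abelian idempotent, `g` a homogeneous idempotent
of degree 0, `s` homogeneous with `f * (s * g) ≠ 0`, then `gR` contains a nonzero graded
abelian idempotent. -/
lemma aux_transfer (hreg : GradedVNRegular 𝒜) {f g s : R} {σ : ι}
    (hfab : GrAbelianIdem 𝒜 f) (hg0 : g ∈ 𝒜 (0:ι)) (hgg : g * g = g)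
    (hs : s ∈ 𝒜 σ) (hne : f * (s * g) ≠ 0) :
    ∃ q r : R, q = g * r ∧ q ≠ 0 ∧ GrAbelianIdem 𝒜 q := by
  have hff : f * f = f := hfab.1.2
  have hf0 : f ∈ 𝒜 (0:ι) := aux_homog_idem_deg0 𝒜 hfab.1.1 hff
  set a : R := f * (s * g) with hadef
  have ham : a ∈ 𝒜 ((0:ι) + (σ + 0)) :=
    SetLike.mul_mem_graded hf0 (SetLike.mul_mem_graded hs hg0)
  have hfa : f * a = a := by
    rw [hadef, ← mul_assoc, hff]
  have hag : a * g = a := by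
    rw [hadef, show f * (s * g) * g = f * (s * (g * g)) by simp only [mul_assoc], hgg]
  obtain ⟨c₀, hc₀m, hc₀⟩ := aux_homog_inner 𝒜 hreg ham
  have hc₀' : a * (c₀ * a) = a := by rw [← mul_assoc]; exact hc₀
  set c : R := g * (c₀ * f) with hcdef
  have hcm : c ∈ 𝒜 ((0:ι) + (-((0:ι) + (σ + 0)) + 0)) :=
    SetLike.mul_mem_graded hg0 (SetLike.mul_mem_graded hc₀m hf0)
  have hca : c * a = g * (c₀ * a) := by
    rw [hcdef, show g * (c₀ * f) * a = g * (c₀ * (f * a)) by simp only [mul_assoc], hfa]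
  have hcac : a * (c * a) = a := by
    rw [hca, show a * (g * (c₀ * a)) = (a * g) * (c₀ * a) by simp only [mul_assoc], hag, hc₀']
  set q : R := c * a with hqdef
  have hqq : q * q = q := by
    rw [hqdef, show c * a * (c * a) = c * (a * (c * a)) by simp only [mul_assoc], hcac]
  have haq : a * q = a := by rw [hqdef]; exact hcac
  have hqne : q ≠ 0 := by
    intro h; rw [h, mul_zero] at haq; exact hne haq.symm
  have hgc : g * c = c := by
    rw [hcdef, ← mul_assoc, hgg]
  have hgq : g * q = q := by rw [hqdef, ← mul_assoc, hgc]
  have hqg : q * g = q := by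
    rw [hqdef, mul_assoc, hag]
  have hcf : c * f = c := by
    rw [hcdef, show g * (c₀ * f) * f = g * (c₀ * (f * f)) by simp only [mul_assoc], hff]
  have hqm : q ∈ 𝒜 (((0:ι) + (-((0:ι) + (σ + 0)) + 0)) + ((0:ι) + (σ + 0))) :=
    SetLike.mul_mem_graded hcm ham
  refine ⟨q, (c₀ * f) * a, by rw [hqdef, hcdef]; simp only [mul_assoc], hqne, ?_⟩
  refine ⟨⟨⟨_, hqm⟩, hqq⟩, ?_⟩
  intro f₁ hf₁h hf₁c hf₁idem x hxc
  have hqf₁ : q * f₁ = f₁ := aux_corner_left hqq hf₁c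
  have hf₁q : f₁ * q = f₁ := aux_corner_right hqq hf₁c
  have hqx : q * x = x := aux_corner_left hqq hxc
  have hxq : x * q = x := aux_corner_right hqq hxc
  obtain ⟨φ₁, hφ₁⟩ := hf₁h
  -- the transported elements
  set F : R := a * (f₁ * c) with hFdef
  set X : R := a * (x * c) with hXdef
  have key : ∀ w : R, q * w = w → c * (a * (w * c)) = w * c := by
    intro w hw
    rw [show c * (a * (w * c)) = (c * a) * (w * c) by simp only [mul_assoc], ← hqdef,
      ← mul_assoc, hw]
  have keyrec : ∀ w : R, q * w = w → w * q = w → c * (a * (w * c)) * a = w := by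
    intro w hw hw'
    rw [key w hw, mul_assoc, ← hqdef, hw']
  have hFidem : F * F = F := by
    rw [hFdef, show a * (f₁ * c) * (a * (f₁ * c)) = a * (f₁ * (c * (a * (f₁ * c)))) by
      simp only [mul_assoc], key f₁ hqf₁, ← mul_assoc f₁ f₁ c, hf₁idem]
  have hFcornerL : f * F = F := by rw [hFdef, ← mul_assoc, hfa]
  have hFcornerR : F * f = F := by
    rw [hFdef, show a * (f₁ * c) * f = a * (f₁ * (c * f)) by simp only [mul_assoc], hcf]
  have hFcorner : f * F * f = F := by rw [hFcornerL, hFcornerR]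
  have hFm : F ∈ 𝒜 (((0:ι) + (σ + 0)) + (φ₁ + ((0:ι) + (-((0:ι) + (σ + 0)) + 0)))) :=
    SetLike.mul_mem_graded ham (SetLike.mul_mem_graded hφ₁ hcm)
  have hXcorner : f * X * f = X := by
    rw [hXdef, show f * (a * (x * c)) * f = (f * a) * (x * (c * f)) by simp only [mul_assoc],
      hfa, hcf, mul_assoc]
  have hcomm : F * X = X * F := hfab.2 F ⟨_, hFm⟩ hFcorner hFidem X hXcorner
  have hFX : F * X = a * ((f₁ * x) * c) := by
    rw [hFdef, hXdef, show a * (f₁ * c) * (a * (x * c)) = a * (f₁ * (c * (a * (x * c)))) by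
      simp only [mul_assoc], key x hqx, ← mul_assoc (f₁) x c]
  have hXF : X * F = a * ((x * f₁) * c) := by
    rw [hFdef, hXdef, show a * (x * c) * (a * (f₁ * c)) = a * (x * (c * (a * (f₁ * c)))) by
      simp only [mul_assoc], key f₁ hqf₁, ← mul_assoc x f₁ c]
  have hq1 : q * (f₁ * x) = f₁ * x := by rw [← mul_assoc, hqf₁]
  have hq2 : (f₁ * x) * q = f₁ * x := by rw [mul_assoc, hxq]
  have hq3 : q * (x * f₁) = x * f₁ := by rw [← mul_assoc, hqx]
  have hq4 : (x * f₁) * q = x * f₁ := by rw [mul_assoc, hf₁q]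
  have hL : c * (F * X) * a = f₁ * x := by rw [hFX]; exact keyrec _ hq1 hq2
  have hR : c * (X * F) * a = x * f₁ := by rw [hXF]; exact keyrec _ hq3 hq4
  rw [← hL, ← hR, hcomm]

end Aux


/-- For a graded von Neumann regular graded right self-injective ring,
the following are equivalent: (a) `R` is of gr-Type I; (b) every nonzero graded right
ideal contains a nonzero graded abelian idempotent; (c) the two-sided ideal generated by
all graded abelian idempotents is graded essential as a right ideal. -/
theorem grTypeI_tfae
    [DecidableEq ι] [AddCommGroup ι] [Ring R] (𝒜 : ι → AddSubgroup R) [GradedRing 𝒜]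
    (hreg : GradedVNRegular 𝒜) (hinj : GradedSelfInjective 𝒜) :
    List.TFAE [
      GrTypeI 𝒜,
      ∀ J : Set R, IsGradedRightIdeal 𝒜 J → (∃ x ∈ J, x ≠ 0) →
        ∃ f ∈ J, f ≠ 0 ∧ GrAbelianIdem 𝒜 f,
      GradedEssentialIn 𝒜
        ((AddSubgroup.closure
          {x : R | ∃ r s f : R, GrAbelianIdem 𝒜 f ∧ x = r * f * s} : AddSubgroup R) : Set R)
        Set.univ ] := by
  tfae_have 1 → 2 := by
    rintro ⟨e, hefaith, heab⟩ J hJ hJne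
    obtain ⟨x₀, hx₀J, hx₀⟩ := hJne
    obtain ⟨z₀, ζ, hz₀m, hz₀0, hz₀J⟩ := aux_homog_elem 𝒜 hJ hx₀J hx₀
    obtain ⟨g, hg0, hgg, hgJ, hgz, hgne⟩ := aux_idem_of_homog 𝒜 hreg hJ hz₀m hz₀J hz₀0
    have hee : e * e = e := heab.1.2
    have he0 : e ∈ 𝒜 (0:ι) := aux_homog_idem_deg0 𝒜 heab.1.1 hee
    obtain ⟨u, hu0, huu, hucen, huT, huT'⟩ := aux_cover 𝒜 hreg hinj he0
    have hes : ∃ s, e * (s * g) ≠ 0 := by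
      by_contra hc; push_neg at hc
      have hug : u * g = 0 := huT' g hc
      have hue : u * e = e := by simpa using huT 1 1
      have hy : e * (1 - u) = 0 := by
        rw [mul_sub, mul_one, ← hucen e, hue, sub_self]
      have h1u : (1:R) - u ∈ 𝒜 (0:ι) := sub_mem (SetLike.one_mem_graded 𝒜) hu0
      have hidem : ((1:R) - u) * (1 - u) = 1 - u := by
        rw [sub_mul, one_mul, mul_sub, mul_one, huu, sub_self, sub_zero]
      have hcen' : ∀ r : R, ((1:R) - u) * r = r * (1 - u) := by
        intro r; rw [sub_mul, one_mul, mul_sub, mul_one, hucen r]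
      have h1u0 : (1:R) - u = 0 := hefaith.2 (1 - u) ⟨0, h1u⟩ hidem hcen' hy
      have hu1 : u = (1:R) := by
        have := sub_eq_zero.mp h1u0; exact this.symm
      apply hgne
      calc g = 1 * g := (one_mul g).symm
      _ = u * g := by rw [hu1]
      _ = 0 := hug
    obtain ⟨s, hs⟩ := hes
    have hσ : ∃ σ, e * (aux_comp 𝒜 s σ * g) ≠ 0 := by
      by_contra hc; push_neg at hc
      apply hs
      conv_lhs => rw [show s = ∑ σ ∈ (decompose 𝒜 s).support, aux_comp 𝒜 s σ from
        (aux_sum_comp 𝒜 s).symm]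
      rw [Finset.sum_mul, Finset.mul_sum]
      exact Finset.sum_eq_zero (fun σ _ => hc σ)
    obtain ⟨σ, hsσ⟩ := hσ
    obtain ⟨q, r, hqgr, hq0, hqab⟩ :=
      aux_transfer 𝒜 hreg heab hg0 hgg (aux_comp_mem 𝒜 s σ) hsσ
    exact ⟨q, by rw [hqgr]; exact hJ.1.2.2 g hgJ r, hq0, hqab⟩
  tfae_have 2 → 3 := by
    intro h2
    refine ⟨Set.subset_univ _, ?_⟩
    intro J hJ _ hJne
    obtain ⟨q, hqJ, hq0, hqab⟩ := h2 J hJ hJne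
    refine ⟨q, ⟨?_, hqJ⟩, hq0⟩
    exact AddSubgroup.subset_closure ⟨1, 1, q, hqab, by rw [one_mul, mul_one]⟩
  tfae_have 3 → 2 := by
    intro h3 J hJ hJne
    set A : Set R := ((AddSubgroup.closure
      {x : R | ∃ r s f : R, GrAbelianIdem 𝒜 f ∧ x = r * f * s} : AddSubgroup R) : Set R)
      with hAdef
    have hAgr : IsGradedRightIdeal 𝒜 A := by
      refine aux_closure_graded 𝒜 _ ?_ ?_
      · rintro x ⟨r, s, f, hfab, rfl⟩ t
        exact AddSubgroup.subset_closure ⟨r, s * t, f, hfab, by simp only [mul_assoc]⟩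
      · rintro x ⟨r, s, f, hfab, rfl⟩ γ
        have hf0 : f ∈ 𝒜 (0:ι) := aux_homog_idem_deg0 𝒜 hfab.1.1 hfab.1.2
        have hexp : r * f * s = ∑ α ∈ (decompose 𝒜 r).support,
            aux_comp 𝒜 r α * (f * s) := by
          rw [← Finset.sum_mul, aux_sum_comp, mul_assoc]
        rw [hexp, aux_comp_sum]
        refine AddSubgroup.sum_mem _ (fun α _ => ?_)
        have h1 : aux_comp 𝒜 (aux_comp 𝒜 r α * (f * s)) (α + (-α + γ))
            = aux_comp 𝒜 r α * aux_comp 𝒜 (f * s) (-α + γ) :=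
          aux_comp_mul_left 𝒜 (aux_comp_mem 𝒜 r α) (f * s) (-α + γ)
        rw [add_neg_cancel_left] at h1
        have h2 : aux_comp 𝒜 (f * s) ((0:ι) + (-α + γ)) = f * aux_comp 𝒜 s (-α + γ) :=
          aux_comp_mul_left 𝒜 hf0 s (-α + γ)
        rw [zero_add] at h2
        rw [h1, h2]
        exact AddSubgroup.subset_closure
          ⟨aux_comp 𝒜 r α, aux_comp 𝒜 s (-α + γ), f, hfab, by rw [mul_assoc]⟩
    have hKgr : IsGradedRightIdeal 𝒜 (A ∩ J) := aux_inter 𝒜 hAgr hJ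
    obtain ⟨x₀, hx₀AJ, hx₀0⟩ := h3.2 J hJ (Set.subset_univ J) hJne
    obtain ⟨z₀, ζ, hz₀m, hz₀0, hz₀K⟩ := aux_homog_elem 𝒜 hKgr hx₀AJ hx₀0
    obtain ⟨g, hg0, hgg, hgK, hgz, hgne⟩ := aux_idem_of_homog 𝒜 hreg hKgr hz₀m hz₀K hz₀0
    have hex : ∃ f s : R, GrAbelianIdem 𝒜 f ∧ f * (s * g) ≠ 0 := by
      by_contra hc; push_neg at hc
      have hAg : ∀ y ∈ A, y * g = 0 := by
        intro y hy
        refine AddSubgroup.closure_induction (p := fun w _ => w * g = 0) ?_ ?_ ?_ ?_ hy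
        · rintro _ ⟨r, s, f, hfab, rfl⟩
          have : r * f * s * g = r * (f * (s * g)) := by simp only [mul_assoc]
          rw [this, hc f s hfab, mul_zero]
        · show (0:R) * g = 0; rw [zero_mul]
        · intro a b _ _ ha hb; show (a + b) * g = 0; rw [add_mul, ha, hb, add_zero]
        · intro a _ ha; show (-a) * g = 0; rw [neg_mul, ha, neg_zero]
      have := hAg g hgK.1
      rw [hgg] at this
      exact hgne this
    obtain ⟨f, s, hfab, hfs⟩ := hex
    have hσ : ∃ σ, f * (aux_comp 𝒜 s σ * g) ≠ 0 := by
      by_contra hc; push_neg at hc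
      apply hfs
      conv_lhs => rw [show s = ∑ σ ∈ (decompose 𝒜 s).support, aux_comp 𝒜 s σ from
        (aux_sum_comp 𝒜 s).symm]
      rw [Finset.sum_mul, Finset.mul_sum]
      exact Finset.sum_eq_zero (fun σ _ => hc σ)
    obtain ⟨σ, hsσ⟩ := hσ
    obtain ⟨q, r, hqgr, hq0, hqab⟩ :=
      aux_transfer 𝒜 hreg hfab hg0 hgg (aux_comp_mem 𝒜 s σ) hsσ
    exact ⟨q, by rw [hqgr]; exact hJ.1.2.2 g hgK.2 r, hq0, hqab⟩
  tfae_have 2 → 1 := by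
    intro h2
    classical
    -- central cover assignment
    have hcovex : ∀ f : R, f ∈ 𝒜 (0:ι) → f * f = f → ∃ u, u ∈ 𝒜 (0:ι) ∧ u * u = u ∧
        (∀ r, u * r = r * u) ∧ (∀ r s : R, u * (r * (f * s)) = r * (f * s)) ∧
        (∀ t, (∀ s, f * (s * t) = 0) → u * t = 0) :=
      fun f h1 _ => aux_cover 𝒜 hreg hinj h1
    choose! cov hcov1 hcov2 hcov3 hcov4 hcov5 using hcovex
    have habf : ∀ f : R, GrAbelianIdem 𝒜 f → f ∈ 𝒜 (0:ι) ∧ f * f = f :=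
      fun f hf => ⟨aux_homog_idem_deg0 𝒜 hf.1.1 hf.1.2, hf.1.2⟩
    -- Zorn: maximal family of abelian idempotents with pairwise orthogonal covers
    set Fam : Set (Set R) := {F | (∀ f ∈ F, GrAbelianIdem 𝒜 f ∧ f ≠ 0) ∧
      (∀ f ∈ F, ∀ f' ∈ F, f ≠ f' → cov f * cov f' = 0)} with hFamdef
    obtain ⟨F, hFmaximal⟩ : ∃ F, Maximal (· ∈ Fam) F := by
      apply zorn_subset
      intro c hcsub hchain
      refine ⟨⋃₀ c, ⟨?_, ?_⟩, fun s hs => Set.subset_sUnion_of_mem hs⟩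
      · rintro f ⟨s, hs, hfs⟩
        exact (hcsub hs).1 f hfs
      · rintro f ⟨s, hs, hfs⟩ f' ⟨s', hs', hfs'⟩ hne
        rcases eq_or_ne s s' with rfl | hss
        · exact (hcsub hs).2 f hfs f' hfs' hne
        · rcases hchain hs hs' hss with h | h
          · exact (hcsub hs').2 f (h hfs) f' hfs' hne
          · exact (hcsub hs).2 f hfs f' (h hfs') hne
    have hFFam : F ∈ Fam := hFmaximal.1
    have hFmax : ∀ G ∈ Fam, F ⊆ G → G = F :=
      fun G hG hFG => subset_antisymm (hFmaximal.2 hG hFG) hFG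
    have hFab : ∀ f ∈ F, GrAbelianIdem 𝒜 f := fun f hf => (hFFam.1 f hf).1
    have hFne : ∀ f ∈ F, f ≠ (0:R) := fun f hf => (hFFam.1 f hf).2
    have hForth : ∀ f ∈ F, ∀ f' ∈ F, f ≠ f' → cov f * cov f' = 0 := hFFam.2
    have hF0 : ∀ f ∈ F, f ∈ 𝒜 (0:ι) := fun f hf => (habf f (hFab f hf)).1
    have hFidem : ∀ f ∈ F, f * f = f := fun f hf => (habf f (hFab f hf)).2
    have hcovff : ∀ f ∈ F, cov f * f = f := by
      intro f hf
      have := hcov4 f (hF0 f hf) (hFidem f hf) 1 1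
      simpa using this
    -- the ideal E generated by the family
    set SE : Set R := {x | ∃ f ∈ F, ∃ r : R, x = f * r} with hSEdef
    set E : Set R := (AddSubgroup.closure SE : Set R) with hEdef
    have hgenE : ∀ f ∈ F, ∀ r : R, f * r ∈ E := fun f hf r =>
      AddSubgroup.subset_closure ⟨f, hf, r, rfl⟩
    have hFE : ∀ f ∈ F, f ∈ E := by
      intro f hf
      have := hgenE f hf 1
      rwa [mul_one] at this
    have hEgr : IsGradedRightIdeal 𝒜 E := by
      refine aux_closure_graded 𝒜 _ ?_ ?_
      · rintro x ⟨f, hf, r, rfl⟩ t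
        have : f * r * t = f * (r * t) := mul_assoc f r t
        rw [this]; exact hgenE f hf (r * t)
      · rintro x ⟨f, hf, r, rfl⟩ γ
        have h1 : aux_comp 𝒜 (f * r) ((0:ι) + γ) = f * aux_comp 𝒜 r γ :=
          aux_comp_mul_left 𝒜 (hF0 f hf) r γ
        rw [zero_add] at h1
        rw [h1]; exact hgenE f hf _
    -- finite support property
    have habsorb : ∀ (G G' : Finset R), ↑G ⊆ F → ↑G' ⊆ F → ∀ x : R,
        (∑ f ∈ G, cov f) * x = x → (∑ f ∈ G ∪ G', cov f) * x = x := by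
      intro G G' hG hG' x hx
      have hsum : (∑ f ∈ G ∪ G', cov f) * (∑ f' ∈ G, cov f') = ∑ f' ∈ G, cov f' := by
        rw [Finset.mul_sum]
        refine Finset.sum_congr rfl (fun f' hf' => ?_)
        rw [Finset.sum_mul]
        refine (Finset.sum_eq_single f' ?_ ?_).trans (hcov2 f' (hF0 f' (hG hf')) (hFidem f' (hG hf')))
        · intro b hb hbne
          refine hForth b ?_ f' (hG hf') hbne
          rcases Finset.mem_union.mp hb with h | h
          · exact hG h
          · exact hG' h
        · intro hnot; exact absurd (Finset.mem_union_left G' hf') hnot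
      calc (∑ f ∈ G ∪ G', cov f) * x
          = (∑ f ∈ G ∪ G', cov f) * ((∑ f' ∈ G, cov f') * x) := by rw [hx]
      _ = ((∑ f ∈ G ∪ G', cov f) * (∑ f' ∈ G, cov f')) * x := by rw [mul_assoc]
      _ = (∑ f' ∈ G, cov f') * x := by rw [hsum]
      _ = x := hx
    have hfinsupp : ∀ x ∈ E, ∃ G : Finset R, ↑G ⊆ F ∧ (∑ f ∈ G, cov f) * x = x := by
      intro x hx
      refine AddSubgroup.closure_induction
        (p := fun y _ => ∃ G : Finset R, ↑G ⊆ F ∧ (∑ f ∈ G, cov f) * y = y) ?_ ?_ ?_ ?_ hx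
      · rintro _ ⟨f, hf, r, rfl⟩
        refine ⟨{f}, by simpa using hf, ?_⟩
        rw [Finset.sum_singleton, ← mul_assoc, hcovff f hf]
      · exact ⟨∅, by simp, by rw [mul_zero]⟩
      · rintro a b _ _ ⟨G, hG, hGa⟩ ⟨G', hG', hG'b⟩
        refine ⟨G ∪ G', ?_, ?_⟩
        · intro f hf
          rcases Finset.mem_union.mp hf with h | h
          · exact hG h
          · exact hG' h
        · rw [mul_add, habsorb G G' hG hG' a hGa,
            Finset.union_comm, habsorb G' G hG' hG b hG'b]
      · rintro a _ ⟨G, hG, hGa⟩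
        exact ⟨G, hG, by rw [mul_neg, hGa]⟩
    -- components lie in the fibers
    have hfiber : ∀ x ∈ E, ∀ f ∈ F, f * (cov f * x) = cov f * x := by
      intro x hx
      refine AddSubgroup.closure_induction
        (p := fun y _ => ∀ f ∈ F, f * (cov f * y) = cov f * y) ?_ ?_ ?_ ?_ hx
      · rintro _ ⟨f', hf', r, rfl⟩ f hf
        rcases eq_or_ne f f' with rfl | hne
        · have h1 : cov f * (f * r) = f * r := by
            have := hcov4 f (hF0 f hf) (hFidem f hf) 1 r
            simpa using this
          rw [h1, ← mul_assoc, hFidem f hf]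
        · have h1 : cov f * (f' * r) = 0 := by
            calc cov f * (f' * r) = cov f * ((cov f' * f') * r) := by rw [hcovff f' hf']
            _ = (cov f * cov f') * (f' * r) := by simp only [mul_assoc]
            _ = 0 := by rw [hForth f hf f' hf' hne, zero_mul]
          rw [h1, mul_zero]
      · intro f _; rw [mul_zero, mul_zero]
      · intro a b _ _ ha hb f hf
        rw [mul_add, mul_add, ha f hf, hb f hf]
      · intro a _ ha f hf
        rw [mul_neg, mul_neg, ha f hf]
    -- full support: the annihilator of the family is zero
    set T' : Set R := {t | ∀ f ∈ F, ∀ s : R, f * (s * t) = 0} with hT'def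
    have hT'gr : IsGradedRightIdeal 𝒜 T' := by
      refine ⟨⟨?_, ?_, ?_⟩, ?_⟩
      · intro f _ s; rw [mul_zero, mul_zero]
      · intro x hx y hy f hf s
        rw [mul_add, mul_add, hx f hf s, hy f hf s, add_zero]
      · intro x hx r f hf s
        have : f * (s * (x * r)) = (f * (s * x)) * r := by simp only [mul_assoc]
        rw [this, hx f hf s, zero_mul]
      · intro t ht γ f hf s
        show f * (s * aux_comp 𝒜 t γ) = 0
        have hexp : s = ∑ σ ∈ (decompose 𝒜 s).support, aux_comp 𝒜 s σ :=
          (aux_sum_comp 𝒜 s).symm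
        rw [hexp, Finset.sum_mul, Finset.mul_sum]
        refine Finset.sum_eq_zero (fun σ _ => ?_)
        have h1 : aux_comp 𝒜 (aux_comp 𝒜 s σ * t) (σ + γ)
            = aux_comp 𝒜 s σ * aux_comp 𝒜 t γ :=
          aux_comp_mul_left 𝒜 (aux_comp_mem 𝒜 s σ) t γ
        have h2 : aux_comp 𝒜 (f * (aux_comp 𝒜 s σ * t)) ((0:ι) + (σ + γ))
            = f * aux_comp 𝒜 (aux_comp 𝒜 s σ * t) (σ + γ) :=
          aux_comp_mul_left 𝒜 (hF0 f hf) _ (σ + γ)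
        rw [ht f hf (aux_comp 𝒜 s σ), aux_comp_zero, h1] at h2
        exact h2.symm
    have hT'zero : ∀ y ∈ T', y = 0 := by
      intro y hy
      by_contra hy0
      obtain ⟨f₀, hf₀T', hf₀0, hf₀ab⟩ := h2 T' hT'gr ⟨y, hy, hy0⟩
      have hf₀0' : f₀ ∈ 𝒜 (0:ι) := (habf f₀ hf₀ab).1
      have hf₀idem : f₀ * f₀ = f₀ := (habf f₀ hf₀ab).2
      have hcovkill : ∀ f ∈ F, cov f * f₀ = 0 := fun f hf =>
        hcov5 f (hF0 f hf) (hFidem f hf) f₀ (fun s => hf₀T' f hf s)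
      have horth : ∀ f ∈ F, cov f₀ * cov f = 0 := by
        intro f hf
        refine hcov5 f₀ hf₀0' hf₀idem (cov f) (fun s => ?_)
        calc f₀ * (s * cov f) = f₀ * (cov f * s) := by rw [← hcov3 f (hF0 f hf) (hFidem f hf) s]
        _ = (f₀ * cov f) * s := by rw [mul_assoc]
        _ = (cov f * f₀) * s := by rw [← hcov3 f (hF0 f hf) (hFidem f hf) f₀]
        _ = 0 := by rw [hcovkill f hf, zero_mul]
      have hf₀F : f₀ ∉ F := by
        intro hf₀F
        have := hf₀T' f₀ hf₀F 1
        rw [one_mul, hf₀idem] at this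
        exact hf₀0 this
      have hFins : insert f₀ F ∈ Fam := by
        constructor
        · rintro f (rfl | hf)
          · exact ⟨hf₀ab, hf₀0⟩
          · exact hFFam.1 f hf
        · rintro f (rfl | hf) f' (rfl | hf') hne
          · exact absurd rfl hne
          · exact horth f' hf'
          · rw [hcov3 f (hF0 f hf) (hFidem f hf) (cov f')]
            exact horth f hf
          · exact hForth f hf f' hf' hne
      have := hFmax _ hFins (Set.subset_insert f₀ F)
      apply hf₀F
      rw [← this]
      exact Set.mem_insert f₀ F
    -- complement of E
    have hZeroGr : IsGradedRightIdeal 𝒜 ({0} : Set R) := by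
      refine ⟨⟨rfl, ?_, ?_⟩, ?_⟩
      · rintro x (rfl : x = 0) y (rfl : y = 0); simp
      · rintro x (rfl : x = 0) r; simp
      · rintro x (rfl : x = 0) γ
        show aux_comp 𝒜 (0:R) γ ∈ ({0} : Set R)
        rw [aux_comp_zero]; rfl
    set Fam2 : Set (Set R) := {C | IsGradedRightIdeal 𝒜 C ∧ ∀ x, x ∈ E → x ∈ C → x = 0}
      with hFam2def
    obtain ⟨C, hCmaximal⟩ : ∃ C, Maximal (· ∈ Fam2) C := by
      apply zorn_subset
      intro c hcsub hchain
      rcases Set.eq_empty_or_nonempty c with rfl | ⟨s₀, hs₀⟩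
      · refine ⟨({0} : Set R), ⟨hZeroGr, ?_⟩, by simp⟩
        rintro x _ (rfl : x = 0); rfl
      · refine ⟨⋃₀ c, ⟨⟨⟨?_, ?_, ?_⟩, ?_⟩, ?_⟩, fun s hs => Set.subset_sUnion_of_mem hs⟩
        · exact ⟨s₀, hs₀, (hcsub hs₀).1.1.1⟩
        · rintro x ⟨s, hs, hxs⟩ y ⟨s', hs', hys'⟩
          rcases eq_or_ne s s' with rfl | hss
          · exact ⟨s, hs, (hcsub hs).1.1.2.1 x hxs y hys'⟩
          · rcases hchain hs hs' hss with h | h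
            · exact ⟨s', hs', (hcsub hs').1.1.2.1 x (h hxs) y hys'⟩
            · exact ⟨s, hs, (hcsub hs).1.1.2.1 x hxs y (h hys')⟩
        · rintro x ⟨s, hs, hxs⟩ r
          exact ⟨s, hs, (hcsub hs).1.1.2.2 x hxs r⟩
        · rintro x ⟨s, hs, hxs⟩ γ
          exact ⟨s, hs, (hcsub hs).1.2 x hxs γ⟩
        · rintro x hxE ⟨s, hs, hxs⟩
          exact (hcsub hs).2 x hxE hxs
    have hCgr : IsGradedRightIdeal 𝒜 C := hCmaximal.1.1
    have hEC : ∀ x, x ∈ E → x ∈ C → x = 0 := hCmaximal.1.2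
    have hCmax : ∀ D ∈ Fam2, C ⊆ D → D = C :=
      fun D hD hCD => subset_antisymm (hCmaximal.2 hD hCD) hCD
    set U : Set R := {x | ∃ a ∈ E, ∃ c' ∈ C, x = a + c'} with hUdef
    have hUgr : IsGradedRightIdeal 𝒜 U := aux_sum_ideal 𝒜 hEgr hCgr
    have hEU : ∀ x ∈ E, x ∈ U := fun x hx => ⟨x, hx, 0, hCgr.1.1, (add_zero x).symm⟩
    have hCU : ∀ x ∈ C, x ∈ U := fun x hx => ⟨0, hEgr.1.1, x, hx, (zero_add x).symm⟩
    have hUess : ∀ K : Set R, IsGradedRightIdeal 𝒜 K → (∃ x ∈ K, x ≠ 0) →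
        ∃ x, (x ∈ U ∧ x ∈ K) ∧ x ≠ 0 := by
      intro K hK ⟨x₀, hx₀K, hx₀0⟩
      by_cases hKU : ∃ x, (x ∈ U ∧ x ∈ K) ∧ x ≠ 0
      · exact hKU
      · exfalso
        push_neg at hKU
        have hKU' : ∀ x, x ∈ U → x ∈ K → x = 0 := fun x h1 h2 => hKU x ⟨h1, h2⟩
        set C' : Set R := {x | ∃ c ∈ C, ∃ k ∈ K, x = c + k} with hC'def
        have hC'gr : IsGradedRightIdeal 𝒜 C' := by
          have := aux_sum_ideal 𝒜 hCgr hK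
          exact this
        have hC'Fam2 : C' ∈ Fam2 := by
          refine ⟨hC'gr, ?_⟩
          rintro x hxE ⟨c, hc, k, hk, rfl⟩
          have hkU : k ∈ U := by
            refine ⟨c + k, hxE, -c, aux_neg_mem 𝒜 hCgr hc, ?_⟩
            rw [add_comm c k, add_assoc, add_neg_cancel, add_zero]
          have hk0 : k = 0 := hKU' k hkU hk
          rw [hk0, add_zero] at hxE ⊢
          exact hEC c hxE hc
        have hCC' : C ⊆ C' := fun c hc => ⟨c, hc, 0, hK.1.1, (add_zero c).symm⟩
        have hC'C : C' = C := hCmax C' hC'Fam2 hCC'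
        have hx₀C : x₀ ∈ C := by
          rw [← hC'C]
          exact ⟨0, hCgr.1.1, x₀, hx₀K, (zero_add x₀).symm⟩
        exact hx₀0 (hKU' x₀ (hCU x₀ hx₀C) hx₀K)
    -- the projection idempotent e
    obtain ⟨e, he0, heE, heC⟩ := aux_proj 𝒜 hinj E C hEgr hCgr hEC
    have heU : ∀ a ∈ E, ∀ c' ∈ C, e * (a + c') = a := by
      intro a ha c' hc'
      rw [mul_add, heE a ha, heC c' hc', add_zero]
    have hee : e * e = e := by
      have := aux_nonsing 𝒜 hreg hUgr hUess (e * e - e) ?_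
      · rwa [sub_eq_zero] at this
      · rintro _ ⟨a, ha, c', hc', rfl⟩
        rw [sub_mul, mul_assoc, heU a ha c' hc', heE a ha, sub_self]
    -- e is graded faithful
    have hfaith : GrFaithfulIdem 𝒜 e := by
      refine ⟨⟨⟨0, he0⟩, hee⟩, ?_⟩
      intro y hyh hyy hycen hey
      refine hT'zero y (fun f hf s => ?_)
      have hfy : f * y = 0 := by
        calc f * y = (e * f) * y := by rw [heE f (hFE f hf)]
        _ = e * (y * f) := by rw [mul_assoc, hycen f]
        _ = (e * y) * f := by rw [mul_assoc]
        _ = 0 := by rw [hey, zero_mul]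
      calc f * (s * y) = f * (y * s) := by rw [hycen s]
      _ = (f * y) * s := by rw [mul_assoc]
      _ = 0 := by rw [hfy, zero_mul]
    -- e is graded abelian
    have habelian : GrAbelianIdem 𝒜 e := by
      refine aux_abelian_of_no_sqzero 𝒜 he0 hee ?_
      intro z hzh hzc hzz
      by_contra hz0
      obtain ⟨ζ, hζ⟩ := hzh
      have hez : e * z = z := aux_corner_left hee hzc
      have hze : z * e = z := aux_corner_right hee hzc
      obtain ⟨b, hbm, hbz⟩ := aux_homog_inner 𝒜 hreg hζ
      have hcm0 : e * b * e ∈ 𝒜 ((0:ι) + -ζ + 0) :=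
        SetLike.mul_mem_graded (SetLike.mul_mem_graded he0 hbm) he0
      have hzcz : z * (e * b * e) * z = z := by
        rw [show z * (e * b * e) * z = (z * e) * b * (e * z) by simp only [mul_assoc],
          hze, hez, hbz]
      -- p and q
      have hpm : z * (e * b * e) ∈ 𝒜 (0:ι) := by
        have := SetLike.mul_mem_graded hζ hcm0
        rwa [show ζ + ((0:ι) + -ζ + 0) = 0 by abel] at this
      have hqm : (e * b * e) * z ∈ 𝒜 (0:ι) := by
        have := SetLike.mul_mem_graded hcm0 hζ
        rwa [show ((0:ι) + -ζ + 0) + ζ = 0 by abel] at this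
      set c : R := e * b * e with hcdef
      set p : R := z * c with hpdef
      set q : R := c * z with hqdef
      have hpp : p * p = p := by
        rw [hpdef, show z * c * (z * c) = (z * c * z) * c by simp only [mul_assoc], hzcz]
      have hqq : q * q = q := by
        rw [hqdef, show c * z * (c * z) = c * (z * c * z) by simp only [mul_assoc], hzcz]
      have hqp : q * p = 0 := by
        rw [hqdef, hpdef, show c * z * (z * c) = c * ((z * z) * c) by simp only [mul_assoc],
          hzz, zero_mul, mul_zero]
      have hpz : p * z = z := hzcz
      have hzq : z * q = z := by rw [hqdef, ← mul_assoc]; exact hzcz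
      have hqz : q * z = 0 := by rw [hqdef, mul_assoc, hzz, mul_zero]
      have hce : c * e = c := by
        rw [hcdef, show e * b * e * e = e * b * (e * e) by simp only [mul_assoc], hee]
      have hec : e * c = c := by
        rw [hcdef, show e * (e * b * e) = ((e * e) * b) * e by simp only [mul_assoc], hee]
      have hep : e * p = p := by rw [hpdef, ← mul_assoc, hez]
      have heq : e * q = q := by rw [hqdef, ← mul_assoc, hec]
      set g : R := p - p * q with hgdef
      have hgm : g ∈ 𝒜 (0:ι) := by
        refine sub_mem hpm ?_
        have := SetLike.mul_mem_graded hpm hqm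
        rwa [add_zero] at this
      have hpqp : (p * q) * p = 0 := by rw [mul_assoc, hqp, mul_zero]
      have hpqpq : (p * q) * (p * q) = 0 := by rw [← mul_assoc, hpqp, zero_mul]
      have hppq : p * (p * q) = p * q := by rw [← mul_assoc, hpp]
      have hgidem : g * g = g := by
        calc g * g = p * p - p * (p * q) - ((p * q) * p - (p * q) * (p * q)) := by
              rw [hgdef, sub_mul, mul_sub, mul_sub]
        _ = g := by rw [hpp, hppq, hpqp, hpqpq, sub_zero, sub_zero, hgdef]
      have hgq : g * q = 0 := by
        rw [hgdef, sub_mul, mul_assoc p q q, hqq, sub_self]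
      have hqg : q * g = 0 := by
        rw [hgdef, mul_sub, hqp, ← mul_assoc, hqp, zero_mul, sub_zero]
      have hgz : g * z = z := by
        rw [hgdef, sub_mul, hpz, mul_assoc, hqz, mul_zero, sub_zero]
      have hgne : g ≠ 0 := fun h => hz0 (by rw [← hgz, h, zero_mul])
      have heg : e * g = g := by
        rw [hgdef, mul_sub, hep, ← mul_assoc, hep]
      have hpg : p * g = g := by
        rw [hgdef, mul_sub, hpp, ← mul_assoc, hpp]
      set s₀ : R := q * (c * g) with hs₀def
      have hqs₀ : q * s₀ = s₀ := by rw [hs₀def, ← mul_assoc, hqq]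
      have hts : z * s₀ = g := by
        calc z * s₀ = (z * q) * (c * g) := by rw [hs₀def, ← mul_assoc]
        _ = (z * c) * g := by rw [hzq, ← mul_assoc]
        _ = g := by rw [← hpdef, hpg]
      have hst : s₀ * z = q := by
        calc s₀ * z = q * (c * (g * z)) := by rw [hs₀def]; simp only [mul_assoc]
        _ = q * q := by rw [hgz, ← hqdef]
        _ = q := hqq
      have hes₀ : e * s₀ = s₀ := by rw [hs₀def, ← mul_assoc, heq]
      have hs₀m : s₀ ∈ 𝒜 ((0:ι) + (((0:ι) + -ζ + 0) + 0)) :=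
        SetLike.mul_mem_graded hqm (SetLike.mul_mem_graded hcm0 hgm)
      -- find homogeneous y ∈ E ∩ gR
      have hK₁gr : IsGradedRightIdeal 𝒜 {w : R | ∃ r, w = g * r} := aux_principal 𝒜 hgm
      have hUK₁ : IsGradedRightIdeal 𝒜 (U ∩ {w : R | ∃ r, w = g * r}) :=
        aux_inter 𝒜 hUgr hK₁gr
      obtain ⟨x₁, hx₁mem, hx₁0⟩ := hUess _ hK₁gr ⟨g, ⟨1, (mul_one g).symm⟩, hgne⟩
      obtain ⟨y, η, hym, hy0, hyU, hyK₁⟩ := aux_homog_elem 𝒜 hUK₁ hx₁mem hx₁0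
      obtain ⟨ry, hyry⟩ := hyK₁
      have hgy : g * y = y := by rw [hyry, ← mul_assoc, hgidem]
      have hey' : e * y = y := by rw [hyry, ← mul_assoc, heg]
      have hyE : y ∈ E := by
        obtain ⟨a, ha, c', hc', hyac⟩ := hyU
        have h1 : e * y = a := by rw [hyac]; exact heU a ha c' hc'
        have h2 : y = a := by rw [← hey', h1]
        rw [h2]; exact ha
      -- find homogeneous v ∈ E ∩ (s₀ y) R
      have hv'0 : s₀ * y ≠ 0 := by
        intro h
        have h1 : z * (s₀ * y) = y := by rw [← mul_assoc, hts, hgy]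
        rw [h, mul_zero] at h1
        exact hy0 h1.symm
      have hv'm : s₀ * y ∈ 𝒜 (((0:ι) + (((0:ι) + -ζ + 0) + 0)) + η) :=
        SetLike.mul_mem_graded hs₀m hym
      have hK₂gr : IsGradedRightIdeal 𝒜 {w : R | ∃ r, w = (s₀ * y) * r} := aux_principal 𝒜 hv'm
      have hUK₂ : IsGradedRightIdeal 𝒜 (U ∩ {w : R | ∃ r, w = (s₀ * y) * r}) :=
        aux_inter 𝒜 hUgr hK₂gr
      obtain ⟨x₂, hx₂mem, hx₂0⟩ := hUess _ hK₂gr ⟨s₀ * y, ⟨1, (mul_one _).symm⟩, hv'0⟩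
      obtain ⟨v, μ, hvm, hv0, hvU, hvK₂⟩ := aux_homog_elem 𝒜 hUK₂ hx₂mem hx₂0
      obtain ⟨m₀, hvm₀⟩ := hvK₂
      obtain ⟨m, θm, hmθ, hvv'm⟩ : ∃ m θm, m ∈ 𝒜 θm ∧ v = (s₀ * y) * m := by
        refine ⟨aux_comp 𝒜 m₀ (-((((0:ι) + (((0:ι) + -ζ + 0) + 0)) + η)) + μ), _,
          aux_comp_mem 𝒜 m₀ _, ?_⟩
        have h1 := aux_comp_mul_left 𝒜 hv'm m₀
          (-((((0:ι) + (((0:ι) + -ζ + 0) + 0)) + η)) + μ)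
        rw [add_neg_cancel_left] at h1
        rw [← h1, ← hvm₀, aux_comp_same 𝒜 hvm]
      set u' : R := y * m with hu'def
      have hv_su : v = s₀ * u' := by rw [hvv'm, hu'def, mul_assoc]
      have hu'E : u' ∈ E := hEgr.1.2.2 y hyE m
      have hgu' : g * u' = u' := by rw [hu'def, ← mul_assoc, hgy]
      have hqv : q * v = v := by rw [hv_su, ← mul_assoc, hqs₀]
      have hzv : z * v = u' := by rw [hv_su, ← mul_assoc, hts, hgu']
      have hu'0 : u' ≠ 0 := by
        intro h; rw [h, mul_zero] at hv_su; exact hv0 hv_su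
      have hu'm : u' ∈ 𝒜 (η + θm) := SetLike.mul_mem_graded hym hmθ
      have hvE : v ∈ E := by
        have hev' : e * (s₀ * y) = s₀ * y := by rw [← mul_assoc, hes₀]
        have hev : e * v = v := by rw [hvm₀, ← mul_assoc, hev']
        obtain ⟨a, ha, c', hc', hvac⟩ := hvU
        have h1 : e * v = a := by rw [hvac]; exact heU a ha c' hc'
        have h2 : v = a := by rw [← hev, h1]
        rw [h2]; exact ha
      -- find the fiber f
      obtain ⟨G, hGF, hGsum⟩ := hfinsupp u' hu'E
      obtain ⟨f, hfG, hfu'⟩ : ∃ f ∈ G, cov f * u' ≠ 0 := by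
        by_contra hc; push_neg at hc
        apply hu'0
        rw [← hGsum, Finset.sum_mul]
        exact Finset.sum_eq_zero (fun f hf => hc f hf)
      have hfF : f ∈ F := hGF hfG
      have hf0' : f ∈ 𝒜 (0:ι) := hF0 f hfF
      have hfidem' : f * f = f := hFidem f hfF
      have hfcen : ∀ r, cov f * r = r * cov f := hcov3 f hf0' hfidem'
      set u₀ : R := cov f * u' with hu₀def
      set v₀ : R := cov f * v with hv₀def
      have hu₀0 : u₀ ≠ 0 := hfu'
      have hfu₀ : f * u₀ = u₀ := hfiber u' hu'E f hfF
      have hfv₀ : f * v₀ = v₀ := hfiber v hvE f hfF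
      have hv₀su : v₀ = s₀ * u₀ := by
        rw [hv₀def, hu₀def, hv_su, ← mul_assoc, hfcen s₀, mul_assoc]
      have hzv₀ : z * v₀ = u₀ := by
        rw [hv₀def, hu₀def, ← mul_assoc, ← hfcen z, mul_assoc, hzv]
      have hv₀0 : v₀ ≠ 0 := fun h => hu₀0 (by rw [← hzv₀, h, mul_zero])
      have hgu₀ : g * u₀ = u₀ := by
        rw [hu₀def, ← mul_assoc, ← hfcen g, mul_assoc, hgu']
      have hqv₀ : q * v₀ = v₀ := by
        rw [hv₀def, ← mul_assoc, ← hfcen q, mul_assoc, hqv]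
      have hu₀m : u₀ ∈ 𝒜 ((0:ι) + (η + θm)) :=
        SetLike.mul_mem_graded (hcov1 f hf0' hfidem') hu'm
      have hv₀m : v₀ ∈ 𝒜 ((0:ι) + μ) :=
        SetLike.mul_mem_graded (hcov1 f hf0' hfidem') hvm
      -- the idempotents g₁ and h₁
      obtain ⟨d₀, hd₀m, hd₀⟩ := aux_homog_inner 𝒜 hreg hu₀m
      set g₁ : R := u₀ * (d₀ * f) with hg₁def
      have hg₁u₀ : g₁ * u₀ = u₀ := by
        rw [hg₁def, show u₀ * (d₀ * f) * u₀ = u₀ * (d₀ * (f * u₀)) by simp only [mul_assoc],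
          hfu₀, ← mul_assoc, hd₀]
      have hg₁idem : g₁ * g₁ = g₁ := by
        conv_lhs => rw [hg₁def, ← mul_assoc, hg₁u₀]
      have hfg₁ : f * g₁ = g₁ := by rw [hg₁def, ← mul_assoc, hfu₀]
      have hg₁f : g₁ * f = g₁ := by
        rw [hg₁def, show u₀ * (d₀ * f) * f = u₀ * (d₀ * (f * f)) by simp only [mul_assoc],
          hfidem']
      have hg₁0 : g₁ ≠ 0 := fun h => hu₀0 (by rw [← hg₁u₀, h, zero_mul])
      have hg₁m : g₁ ∈ 𝒜 (0:ι) := by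
        have := SetLike.mul_mem_graded hu₀m (SetLike.mul_mem_graded hd₀m hf0')
        rwa [show ((0:ι) + (η + θm)) + (-((0:ι) + (η + θm)) + 0) = 0 by abel] at this
      have hgg₁ : g * g₁ = g₁ := by rw [hg₁def, ← mul_assoc, hgu₀]
      obtain ⟨d₀', hd₀'m, hd₀'⟩ := aux_homog_inner 𝒜 hreg hv₀m
      set h₁ : R := v₀ * (d₀' * f) with hh₁def
      have hh₁v₀ : h₁ * v₀ = v₀ := by
        rw [hh₁def, show v₀ * (d₀' * f) * v₀ = v₀ * (d₀' * (f * v₀)) by simp only [mul_assoc],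
          hfv₀, ← mul_assoc, hd₀']
      have hh₁idem : h₁ * h₁ = h₁ := by
        conv_lhs => rw [hh₁def, ← mul_assoc, hh₁v₀]
      have hfh₁ : f * h₁ = h₁ := by rw [hh₁def, ← mul_assoc, hfv₀]
      have hh₁f : h₁ * f = h₁ := by
        rw [hh₁def, show v₀ * (d₀' * f) * f = v₀ * (d₀' * (f * f)) by simp only [mul_assoc],
          hfidem']
      have hh₁m : h₁ ∈ 𝒜 (0:ι) := by
        have := SetLike.mul_mem_graded hv₀m (SetLike.mul_mem_graded hd₀'m hf0')
        rwa [show ((0:ι) + μ) + (-((0:ι) + μ) + 0) = 0 by abel] at this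
      have hqh₁ : q * h₁ = h₁ := by rw [hh₁def, ← mul_assoc, hqv₀]
      -- the witness t₂ and the square-zero element w
      set t₂ : R := g₁ * (z * h₁) with ht₂def
      have hft₂ : f * t₂ = t₂ := by rw [ht₂def, ← mul_assoc, hfg₁]
      have ht₂f : t₂ * f = t₂ := by
        rw [ht₂def, show g₁ * (z * h₁) * f = g₁ * (z * (h₁ * f)) by simp only [mul_assoc], hh₁f]
      have ht₂h₁ : t₂ * h₁ = t₂ := by
        rw [ht₂def, show g₁ * (z * h₁) * h₁ = g₁ * (z * (h₁ * h₁)) by simp only [mul_assoc],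
          hh₁idem]
      have hgt₂ : g * t₂ = t₂ := by rw [ht₂def, ← mul_assoc, hgg₁]
      have ht₂s : t₂ * (s₀ * g₁) = g₁ := by
        have hsg : s₀ * g₁ = v₀ * (d₀ * f) := by
          rw [hg₁def, ← mul_assoc, ← hv₀su]
        calc t₂ * (s₀ * g₁) = g₁ * (z * (h₁ * (v₀ * (d₀ * f)))) := by
              rw [hsg, ht₂def]; simp only [mul_assoc]
        _ = g₁ * (z * (v₀ * (d₀ * f))) := by rw [← mul_assoc h₁ v₀ _, hh₁v₀]
        _ = g₁ * (u₀ * (d₀ * f)) := by rw [← mul_assoc z v₀ _, hzv₀]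
        _ = g₁ := by rw [← hg₁def, hg₁idem]
      have ht₂0 : t₂ ≠ 0 := fun h => hg₁0 (by rw [← ht₂s, h, zero_mul])
      set w : R := (f - h₁) * t₂ with hwdef
      have hwsq : w * w = 0 := by
        have h1 : t₂ * (f - h₁) = 0 := by rw [mul_sub, ht₂f, ht₂h₁, sub_self]
        rw [hwdef, mul_assoc, ← mul_assoc t₂ (f - h₁) t₂, h1, zero_mul, mul_zero]
      have hwm : IsHomog 𝒜 w :=
        ⟨_, SetLike.mul_mem_graded (sub_mem hf0' hh₁m)
          (SetLike.mul_mem_graded hg₁m (SetLike.mul_mem_graded hζ hh₁m))⟩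
      have hwcorner : f * w * f = w := by
        have h1 : f * (f - h₁) = f - h₁ := by rw [mul_sub, hfidem', hfh₁]
        have h2 : f * w = w := by rw [hwdef, ← mul_assoc, h1]
        have h3 : w * f = w := by rw [hwdef, mul_assoc, ht₂f]
        rw [h2, h3]
      have hw0 : w ≠ 0 := by
        intro h
        have hft₂h : t₂ = h₁ * t₂ := by
          have h1 : f * t₂ - h₁ * t₂ = 0 := by rw [← sub_mul, ← hwdef, h]
          have h2 := sub_eq_zero.mp h1
          rw [hft₂] at h2
          exact h2
        have hqt₂ : q * t₂ = t₂ := by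
          conv_lhs => rw [hft₂h, ← mul_assoc, hqh₁]
          rw [← hft₂h]
        have ht₂z : t₂ = 0 := by
          calc t₂ = q * (g * t₂) := by rw [hgt₂, hqt₂]
          _ = (q * g) * t₂ := (mul_assoc q g t₂).symm
          _ = 0 := by rw [hqg, zero_mul]
        exact ht₂0 ht₂z
      exact hw0 (aux_abelian_no_sqzero 𝒜 hreg (hFab f hfF) hwm hwcorner hwsq)
    exact ⟨e, hfaith, habelian⟩
  tfae_finish
end
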